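/- arXiv:1001.1345 — 4 statements merged into one kernel-verified Lean document; each statement's English description precedes it below -/
import Mathlib

section
/- Let (X_n)_{n∈ℤ} be a strictly stationary sequence of random variables, each regularly varying with index α ∈ (0,1), and let (a_n) be a positive sequence with n P(|X_1|>a_n) → 1. Then for all δ>0, lim_{u↓0} limsup_{n→∞} P( max_{1≤k≤n} | Σ_{i=1}^k ( (X_i/a_n) 1{|X_i| ≤ u a_n} − E[(X_i/a_n) 1{|X_i| ≤ u a_n}] ) | > δ ) = 0. -/
open MeasureTheory Filter Set


lemma geom_sum_bound (K : ℝ) (hK0 : 0 < K) (hK2 : K < 2) (J : ℕ) :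
    ∑ j ∈ Finset.range J, (2:ℝ)^(j+1) * K^(J-j) ≤ 2^(J+1) * (K/(2-K)) := by
  induction J with
  | zero =>
      have h2K : (0:ℝ) < 2 - K := by linarith
      simp
      positivity
  | succ J ih =>
      rw [Finset.sum_range_succ]
      have h1 : ∑ j ∈ Finset.range J, (2:ℝ)^(j+1) * K^(J+1-j)
          = K * ∑ j ∈ Finset.range J, (2:ℝ)^(j+1) * K^(J-j) := by
        rw [Finset.mul_sum]
        refine Finset.sum_congr rfl fun j hj => ?_
        have hjJ : j ≤ J := (Finset.mem_range.mp hj).le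
        have : J + 1 - j = (J - j) + 1 := by omega
        rw [this, pow_succ]; ring
      rw [h1]
      have h2 : (2:ℝ)^(J+1) * K^(J+1-J) = 2^(J+1) * K := by
        congr 1; rw [Nat.add_sub_cancel_left, pow_one]
      rw [h2]
      have h3 : K * ∑ j ∈ Finset.range J, (2:ℝ)^(j+1) * K^(J-j) ≤ K * (2^(J+1) * (K/(2-K))) :=
        mul_le_mul_of_nonneg_left ih hK0.le
      have h2K : (2:ℝ) - K ≠ 0 := by linarith
      have h4 : K * ((2:ℝ)^(J+1) * (K/(2-K))) + 2^(J+1) * K = 2^(J+1+1) * (K/(2-K)) := by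
        field_simp
        ring
      linarith

lemma pointwise_slices (x1 : ℝ) (hx1 : 0 < x1) (J : ℕ) (y : ℝ)
    (hyJ : y ≤ x1 * 2^J) :
    y ≤ x1 + ∑ j ∈ Finset.range J, (x1 * 2^(j+1)) * (if x1 * 2^j < y then (1:ℝ) else 0) := by
  induction J with
  | zero => simpa using hyJ
  | succ J ih =>
      rw [Finset.sum_range_succ]
      have hnn : ∀ j, 0 ≤ (x1 * 2^(j+1)) * (if x1 * 2^j < y then (1:ℝ) else 0) := by
        intro j; positivity
      by_cases h : y ≤ x1 * 2^J
      · have := ih h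
        have : 0 ≤ (x1 * 2^(J+1)) * (if x1 * 2^J < y then (1:ℝ) else 0) := hnn J
        linarith [ih h]
      · push_neg at h
        rw [if_pos h, mul_one]
        have hsum : 0 ≤ ∑ j ∈ Finset.range J, (x1 * 2^(j+1)) * (if x1 * 2^j < y then (1:ℝ) else 0) :=
          Finset.sum_nonneg fun j _ => hnn j
        nlinarith


lemma chain_bound {T : ℝ → ℝ} {x1 K : ℝ} (hx1 : 0 < x1) (hK : 0 ≤ K)
    (hh : ∀ x, x1 ≤ x → T (x/2) ≤ K * T x) :
    ∀ j d : ℕ, T (x1 * 2^j) ≤ K^d * T (x1 * 2^(j+d)) := by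
  intro j d
  induction d with
  | zero => simp
  | succ d ih =>
      have h1 : (1:ℝ) ≤ 2^(j+d+1) := one_le_pow₀ (by norm_num)
      have hx : x1 ≤ x1 * 2^(j+d+1) := by nlinarith
      have h2 : T ((x1 * 2^(j+d+1))/2) ≤ K * T (x1 * 2^(j+d+1)) := hh _ hx
      have he : (x1 * 2^(j+d+1))/2 = x1 * 2^(j+d) := by
        rw [pow_succ]; ring
      rw [he] at h2
      calc T (x1 * 2^j) ≤ K^d * T (x1 * 2^(j+d)) := ih
        _ ≤ K^d * (K * T (x1 * 2^(j+d+1))) := mul_le_mul_of_nonneg_left h2 (pow_nonneg hK d)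
        _ = K^(d+1) * T (x1 * 2^(j+(d+1))) := by rw [show j+(d+1) = j+d+1 from rfl, pow_succ]; ring

lemma doubling_atTop {T : ℝ → ℝ} (hT : Antitone T) {x2 r : ℝ} (hx2 : 0 < x2)
    (hTpos : ∀ x, 0 < x → 0 < T x) (hr : 1 < 2*r)
    (hdbl : ∀ x, x2 ≤ x → r * T x ≤ T (2*x)) :
    Tendsto (fun x => x * T x) atTop atTop := by
  set b := x2 * T (2*x2) with hb
  have hbpos : 0 < b := mul_pos hx2 (hTpos _ (by linarith))
  have hrpos : 0 < r := by linarith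
  have base : ∀ m : ℕ, ∀ y, x2 ≤ y → y ≤ x2 * 2^(m+1) → b ≤ y * T y := by
    intro m
    induction m with
    | zero =>
        intro y h1 h2
        have h2' : y ≤ 2 * x2 := by norm_num at h2; linarith
        exact mul_le_mul h1 (hT (by linarith)) (hTpos _ (by linarith)).le (by linarith)
    | succ m ih =>
        intro y h1 h2
        by_cases h : y ≤ x2 * 2^(m+1)
        · exact ih y h1 h
        · push_neg at h
          have h1p : (2:ℝ)^1 ≤ 2^(m+1) := pow_le_pow_right₀ (by norm_num) (by omega)
          have hy2 : x2 ≤ y/2 := by rw [pow_one] at h1p; nlinarith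
          have hy2' : y/2 ≤ x2 * 2^(m+1) := by
            rw [pow_succ] at h2; linarith
          have hb2 : b ≤ (y/2) * T (y/2) := ih _ hy2 hy2'
          have hd : r * T (y/2) ≤ T (2*(y/2)) := hdbl _ hy2
          rw [show 2*(y/2) = y by ring] at hd
          have hTy2 : 0 ≤ T (y/2) := (hTpos _ (by linarith)).le
          calc b ≤ (y/2) * T (y/2) := hb2
            _ ≤ (y/2) * ((2*r) * T (y/2)) := by nlinarith
            _ = y * (r * T (y/2)) := by ring
            _ ≤ y * T y := mul_le_mul_of_nonneg_left hd (by linarith)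
  have base' : ∀ y, x2 ≤ y → b ≤ y * T y := by
    intro y hy
    obtain ⟨m, hm⟩ := pow_unbounded_of_one_lt (y / x2) (show (1:ℝ) < 2 by norm_num)
    have h2m : (0:ℝ) < 2^m := by positivity
    have : y < x2 * 2^m := by
      have := (div_lt_iff₀ hx2).mp hm; linarith
    exact base m y hy (by rw [pow_succ]; nlinarith)
  have step : ∀ m : ℕ, ∀ y, x2 * 2^m ≤ y → (2*r)^m * b ≤ y * T y := by
    intro m
    induction m with
    | zero => intro y hy; simpa using base' y (by simpa using hy)
    | succ m ih =>
        intro y hy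
        have h1p : (1:ℝ) ≤ 2^m := one_le_pow₀ (by norm_num)
        have hy2 : x2 * 2^m ≤ y/2 := by rw [pow_succ] at hy; linarith
        have hx2y : x2 ≤ y/2 := by nlinarith
        have hib := ih _ hy2
        have hd : r * T (y/2) ≤ T (2*(y/2)) := hdbl _ hx2y
        rw [show 2*(y/2) = y by ring] at hd
        have hy0 : 0 < y := by nlinarith
        calc (2*r)^(m+1) * b = (2*r) * ((2*r)^m * b) := by rw [pow_succ]; ring
          _ ≤ (2*r) * ((y/2) * T (y/2)) := mul_le_mul_of_nonneg_left hib (by linarith)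
          _ = y * (r * T (y/2)) := by ring
          _ ≤ y * T y := mul_le_mul_of_nonneg_left hd hy0.le
  rw [tendsto_atTop]
  intro C
  obtain ⟨m, hm⟩ := pow_unbounded_of_one_lt (C / b) hr
  have hCm : C ≤ (2*r)^m * b := by
    have := (div_lt_iff₀ hbpos).mp hm; linarith
  filter_upwards [eventually_ge_atTop (x2 * 2^m)] with y hy
  exact hCm.trans (step m y hy)

lemma trunc_bound {Ω : Type*} [MeasurableSpace Ω] (P : Measure Ω) [IsProbabilityMeasure P]
    (Z : Ω → ℝ) (hZ : Measurable Z) (x1 K : ℝ) (hx1 : 0 < x1) (hK0 : 0 < K) (hK2 : K < 2)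
    (hchain : ∀ x, x1 ≤ x →
      (P {ω | x/2 < |Z ω|}).toReal ≤ K * (P {ω | x < |Z ω|}).toReal)
    (t : ℝ) (ht : 0 < t) :
    ∫ ω, (if |Z ω| ≤ t then |Z ω| else 0) ∂P
      ≤ x1 + 4*(K/(2-K)) * t * (P {ω | t < |Z ω|}).toReal := by
  set T : ℝ → ℝ := fun x => (P {ω | x < |Z ω|}).toReal with hTdef
  have hTnn : ∀ x, 0 ≤ T x := fun x => ENNReal.toReal_nonneg
  have hTanti : Antitone T := fun x y hxy =>
    ENNReal.toReal_mono (measure_ne_top P _)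
      (measure_mono (fun ω hω => lt_of_le_of_lt hxy hω))
  have hc : 0 ≤ K/(2-K) := by
    apply div_nonneg hK0.le; linarith
  -- choose J minimal with t ≤ x1 * 2^J
  have hex : ∃ J : ℕ, t ≤ x1 * 2^J := by
    obtain ⟨m, hm⟩ := pow_unbounded_of_one_lt (t / x1) (show (1:ℝ) < 2 by norm_num)
    exact ⟨m, by rw [div_lt_iff₀ hx1] at hm; nlinarith⟩
  classical
  set J := Nat.find hex with hJ
  have hJle : t ≤ x1 * 2^J := Nat.find_spec hex
  -- pointwise bound and integration
  have hmeas_set : ∀ s : ℝ, MeasurableSet {ω | s < |Z ω|} :=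
    fun s => measurableSet_lt measurable_const hZ.abs
  have hWmeas : Measurable (fun ω => if |Z ω| ≤ t then |Z ω| else 0) :=
    Measurable.ite (measurableSet_le hZ.abs measurable_const) hZ.abs measurable_const
  have hWint : Integrable (fun ω => if |Z ω| ≤ t then |Z ω| else 0) P := by
    refine Integrable.mono' (integrable_const t) hWmeas.aestronglyMeasurable
      (ae_of_all _ fun ω => ?_)
    by_cases h : |Z ω| ≤ t
    · simp [h, abs_abs]
    · simp [h, ht.le]
  have hRint : Integrable (fun ω =>
      x1 + ∑ j ∈ Finset.range J, Set.indicator {ω' | x1 * 2^j < |Z ω'|}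
        (fun _ => x1 * 2^(j+1)) ω) P := by
    refine (integrable_const x1).add (integrable_finset_sum _ fun j _ => ?_)
    exact (integrable_const _).indicator (hmeas_set _)
  have hpw : ∀ ω, (if |Z ω| ≤ t then |Z ω| else 0)
      ≤ x1 + ∑ j ∈ Finset.range J, Set.indicator {ω' | x1 * 2^j < |Z ω'|}
        (fun _ => x1 * 2^(j+1)) ω := by
    intro ω
    have hind : ∀ j : ℕ, Set.indicator {ω' | x1 * 2^j < |Z ω'|} (fun _ => x1 * 2^(j+1)) ω
        = (x1 * 2^(j+1)) * (if x1 * 2^j < |Z ω| then (1:ℝ) else 0) := by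
      intro j
      simp only [Set.indicator_apply, Set.mem_setOf_eq]
      by_cases h : x1 * 2^j < |Z ω| <;> simp [h]
    simp_rw [hind]
    by_cases h : |Z ω| ≤ t
    · rw [if_pos h]
      exact pointwise_slices x1 hx1 J _ (h.trans hJle)
    · rw [if_neg h]
      have : ∀ j ∈ Finset.range J, 0 ≤ (x1 * 2^(j+1)) * (if x1 * 2^j < |Z ω| then (1:ℝ) else 0) := by
        intro j _; positivity
      have := Finset.sum_nonneg this
      linarith
  have hint : ∫ ω, (if |Z ω| ≤ t then |Z ω| else 0) ∂P
      ≤ x1 + ∑ j ∈ Finset.range J, (x1 * 2^(j+1)) * T (x1 * 2^j) := by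
    calc ∫ ω, (if |Z ω| ≤ t then |Z ω| else 0) ∂P
        ≤ ∫ ω, (x1 + ∑ j ∈ Finset.range J, Set.indicator {ω' | x1 * 2^j < |Z ω'|}
            (fun _ => x1 * 2^(j+1)) ω) ∂P := integral_mono hWint hRint hpw
      _ = x1 + ∑ j ∈ Finset.range J, (x1 * 2^(j+1)) * T (x1 * 2^j) := by
          rw [integral_add (integrable_const x1) (integrable_finset_sum _ fun j _ =>
            (integrable_const _).indicator (hmeas_set _)), integral_const,
            integral_finset_sum _ (fun j _ => (integrable_const _).indicator (hmeas_set _))]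
          simp only [measure_univ, ENNReal.toReal_one, probReal_univ, smul_eq_mul, one_mul]
          congr 1
          refine Finset.sum_congr rfl fun j _ => ?_
          rw [integral_indicator_const _ (hmeas_set _)]
          simp [hTdef, mul_comm, Measure.real]
  -- bound the sum using the chain bound
  have hsum : ∑ j ∈ Finset.range J, (x1 * 2^(j+1)) * T (x1 * 2^j)
      ≤ 4*(K/(2-K)) * t * T t := by
    rcases Nat.eq_zero_or_pos J with hJ0 | hJpos
    · rw [hJ0]
      simp only [Finset.range_zero, Finset.sum_empty]
      positivity
    · have hTt : T (x1 * 2^J) ≤ T t := hTanti hJle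
      have hterm : ∀ j ∈ Finset.range J, (x1 * 2^(j+1)) * T (x1 * 2^j)
          ≤ x1 * T t * (2^(j+1) * K^(J-j)) := by
        intro j hj
        have hjJ : j ≤ J := (Finset.mem_range.mp hj).le
        have hch := chain_bound (T := T) hx1 hK0.le (fun x hx => hchain x hx) j (J - j)
        rw [show j + (J - j) = J by omega] at hch
        have h1 : T (x1 * 2^j) ≤ K^(J-j) * T t :=
          hch.trans (mul_le_mul_of_nonneg_left hTt (pow_nonneg hK0.le _))
        calc (x1 * 2^(j+1)) * T (x1 * 2^j) ≤ (x1 * 2^(j+1)) * (K^(J-j) * T t) := by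
              apply mul_le_mul_of_nonneg_left h1; positivity
          _ = x1 * T t * (2^(j+1) * K^(J-j)) := by ring
      have hTtnn : 0 ≤ T t := hTnn t
      calc ∑ j ∈ Finset.range J, (x1 * 2^(j+1)) * T (x1 * 2^j)
          ≤ ∑ j ∈ Finset.range J, x1 * T t * (2^(j+1) * K^(J-j)) :=
            Finset.sum_le_sum hterm
        _ = x1 * T t * ∑ j ∈ Finset.range J, (2:ℝ)^(j+1) * K^(J-j) := by
            rw [Finset.mul_sum]
        _ ≤ x1 * T t * (2^(J+1) * (K/(2-K))) := by
            apply mul_le_mul_of_nonneg_left (geom_sum_bound K hK0 hK2 J) (by positivity)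
        _ ≤ 4*(K/(2-K)) * t * T t := by
            have hmin : x1 * 2^(J-1) < t := by
              have := Nat.find_min hex (show J - 1 < J by omega)
              push_neg at this; exact this
            have h2 : x1 * 2^(J+1) ≤ 4 * t := by
              have : (2:ℝ)^(J+1) = 4 * 2^(J-1) := by
                rw [show J + 1 = (J-1) + 2 by omega, pow_add]; ring
              rw [this]; nlinarith [pow_pos (show (0:ℝ) < 2 by norm_num) (J-1)]
            have h3 := mul_le_mul_of_nonneg_right h2 (mul_nonneg hc hTtnn)
            nlinarith [h3]
  linarith

lemma key_estimate {Ω : Type*} [MeasurableSpace Ω] (P : Measure Ω) [IsProbabilityMeasure P]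
    (X : ℤ → Ω → ℝ) (hXmeas : ∀ i, Measurable (X i))
    (hmap : ∀ i : ℤ, Measure.map (X i) P = Measure.map (X 1) P)
    (u A δ : ℝ) (hu : 0 < u) (hA : 0 < A) (hδ : 0 < δ) (n : ℕ) :
    (P {ω | ∃ k : ℕ, 1 ≤ k ∧ k ≤ n ∧ δ <
        |∑ i ∈ Finset.Icc 1 k, ((if |X (i : ℤ) ω| ≤ u * A then X (i : ℤ) ω / A else 0)
          - ∫ ω', (if |X (i : ℤ) ω'| ≤ u * A then X (i : ℤ) ω' / A else 0) ∂P)|}).toReal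
    ≤ (2 * n / δ) * ∫ ω, |if |X 1 ω| ≤ u * A then X 1 ω / A else 0| ∂P := by
  classical
  set Y : ℕ → Ω → ℝ := fun i ω => if |X (i : ℤ) ω| ≤ u * A then X (i : ℤ) ω / A else 0 with hYdef
  have hYmeas : ∀ i, Measurable (Y i) := fun i =>
    Measurable.ite (measurableSet_le (hXmeas _).abs measurable_const)
      ((hXmeas _).div_const A) measurable_const
  have hYbdd : ∀ i ω, |Y i ω| ≤ u := by
    intro i ω
    by_cases h : |X (i : ℤ) ω| ≤ u * A
    · simp only [hYdef, if_pos h]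
      rw [abs_div, abs_of_pos hA, div_le_iff₀ hA]
      exact h
    · simp only [hYdef, if_neg h, abs_zero]; exact hu.le
  have hYint : ∀ i, Integrable (Y i) P := fun i =>
    Integrable.mono' (integrable_const u) (hYmeas i).aestronglyMeasurable
      (ae_of_all _ fun ω => by simpa using hYbdd i ω)
  set μ : ℕ → ℝ := fun i => ∫ ω, Y i ω ∂P with hμdef
  set G : Ω → ℝ := fun ω => ∑ i ∈ Finset.Icc 1 n, (|Y i ω| + |μ i|) with hGdef
  have hGint : Integrable G P :=
    integrable_finset_sum _ fun i _ => (hYint i).abs.add (integrable_const _)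
  have hGnn : ∀ ω, 0 ≤ G ω := fun ω =>
    Finset.sum_nonneg fun i _ => add_nonneg (abs_nonneg _) (abs_nonneg _)
  -- the bad set is contained in {δ ≤ G}
  have hsub : {ω | ∃ k : ℕ, 1 ≤ k ∧ k ≤ n ∧ δ <
      |∑ i ∈ Finset.Icc 1 k, ((if |X (i : ℤ) ω| ≤ u * A then X (i : ℤ) ω / A else 0)
        - ∫ ω', (if |X (i : ℤ) ω'| ≤ u * A then X (i : ℤ) ω' / A else 0) ∂P)|}
      ⊆ {ω | δ ≤ G ω} := by
    intro ω hω
    obtain ⟨k, hk1, hkn, hδlt⟩ := hω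
    have h1 : |∑ i ∈ Finset.Icc 1 k, (Y i ω - μ i)| ≤ ∑ i ∈ Finset.Icc 1 k, (|Y i ω| + |μ i|) :=
      (Finset.abs_sum_le_sum_abs _ _).trans
        (Finset.sum_le_sum fun i _ => abs_sub _ _)
    have h2 : ∑ i ∈ Finset.Icc 1 k, (|Y i ω| + |μ i|) ≤ G ω := by
      apply Finset.sum_le_sum_of_subset_of_nonneg (Finset.Icc_subset_Icc_right hkn)
      intro i _ _; exact add_nonneg (abs_nonneg _) (abs_nonneg _)
    exact le_trans (le_of_lt hδlt) (h1.trans h2)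
  have hmarkov := mul_meas_ge_le_integral_of_nonneg (ae_of_all _ hGnn) hGint δ
  have hmono : (P {ω | ∃ k : ℕ, 1 ≤ k ∧ k ≤ n ∧ δ <
      |∑ i ∈ Finset.Icc 1 k, ((if |X (i : ℤ) ω| ≤ u * A then X (i : ℤ) ω / A else 0)
        - ∫ ω', (if |X (i : ℤ) ω'| ≤ u * A then X (i : ℤ) ω' / A else 0) ∂P)|}).toReal
      ≤ (P {ω | δ ≤ G ω}).toReal :=
    ENNReal.toReal_mono (measure_ne_top P _) (measure_mono hsub)
  -- compute/bound ∫ G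
  set I1 : ℝ := ∫ ω, |if |X 1 ω| ≤ u * A then X 1 ω / A else 0| ∂P with hI1def
  have habs_eq : ∀ i : ℕ, ∫ ω, |Y i ω| ∂P = I1 := by
    intro i
    have hφ : Measurable fun y : ℝ => |if |y| ≤ u * A then y / A else 0| :=
      (Measurable.ite (measurableSet_le measurable_abs measurable_const)
        (measurable_id.div_const A) measurable_const).abs
    calc ∫ ω, |Y i ω| ∂P
        = ∫ y, |if |y| ≤ u * A then y / A else 0| ∂(Measure.map (X (i : ℤ)) P) :=
          (integral_map (hXmeas _).aemeasurable hφ.aestronglyMeasurable).symm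
      _ = ∫ y, |if |y| ≤ u * A then y / A else 0| ∂(Measure.map (X 1) P) := by rw [hmap]
      _ = I1 := integral_map (hXmeas 1).aemeasurable hφ.aestronglyMeasurable
  have hμle : ∀ i : ℕ, |μ i| ≤ ∫ ω, |Y i ω| ∂P := by
    intro i
    calc |μ i| = ‖∫ ω, Y i ω ∂P‖ := (Real.norm_eq_abs _).symm
      _ ≤ ∫ ω, ‖Y i ω‖ ∂P := norm_integral_le_integral_norm _
      _ = ∫ ω, |Y i ω| ∂P := by simp [Real.norm_eq_abs]
  have hGle : ∫ ω, G ω ∂P ≤ 2 * n * I1 := by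
    have hGeq : ∫ ω, G ω ∂P = ∑ i ∈ Finset.Icc 1 n, ∫ ω, (|Y i ω| + |μ i|) ∂P :=
      integral_finset_sum _ fun i _ => (hYint i).abs.add (integrable_const _)
    rw [hGeq]
    have hterm : ∀ i ∈ Finset.Icc 1 n, (∫ ω, (|Y i ω| + |μ i|) ∂P) ≤ 2 * I1 := by
      intro i hi
      rw [integral_add (hYint i).abs (integrable_const _), integral_const]
      simp only [measure_univ, ENNReal.toReal_one, probReal_univ, smul_eq_mul, one_mul]
      rw [habs_eq i]
      have := (hμle i).trans_eq (habs_eq i)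
      linarith
    calc ∑ i ∈ Finset.Icc 1 n, ∫ ω, (|Y i ω| + |μ i|) ∂P
        ≤ ∑ _i ∈ Finset.Icc 1 n, 2 * I1 := Finset.sum_le_sum hterm
      _ = 2 * n * I1 := by
          rw [Finset.sum_const, Nat.card_Icc]
          simp [mul_comm, mul_assoc]
  -- combine
  have hfin : (P {ω | δ ≤ G ω}).toReal ≤ (∫ ω, G ω ∂P) / δ := by
    rw [le_div_iff₀ hδ]
    calc (P {ω | δ ≤ G ω}).toReal * δ = δ * (P {ω | δ ≤ G ω}).toReal := mul_comm _ _
      _ ≤ ∫ ω, G ω ∂P := hmarkov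
  calc (P _).toReal ≤ (P {ω | δ ≤ G ω}).toReal := hmono
    _ ≤ (∫ ω, G ω ∂P) / δ := hfin
    _ ≤ (2 * n * I1) / δ := by gcongr
    _ = (2 * n / δ) * I1 := by ring
/-- for a strictly stationary sequence of regularly varying random
variables with index `α ∈ (0,1)`, the truncated centered partial-sum maxima are
asymptotically negligible: for all `δ>0`,
`lim_{u↓0} limsup_n P(max_{1≤k≤n} |Σ_{i≤k}(truncated − mean)| > δ) = 0`. -/
theorem truncated_sum_negligible_alpha_lt_one
    {Ω : Type*} [MeasurableSpace Ω] (P : Measure Ω) [IsProbabilityMeasure P]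
    (X : ℤ → Ω → ℝ) (hXmeas : ∀ i, Measurable (X i))
    -- strict stationarity
    (hstat : ∀ (k : ℤ) (m : ℕ),
      Measure.map (fun ω => fun j : Fin m => X (1 + k + (j : ℤ)) ω) P
        = Measure.map (fun ω => fun j : Fin m => X (1 + (j : ℤ)) ω) P)
    (α : ℝ) (hα : 0 < α) (hα1 : α < 1)
    -- X₁ is regularly varying with index α
    (hpos : ∀ x : ℝ, 0 < x → 0 < P {ω | x < |X 1 ω|})
    (hrv : ∀ u : ℝ, 0 < u →
      Tendsto (fun x : ℝ =>
          (P {ω | u * x < |X 1 ω|}).toReal / (P {ω | x < |X 1 ω|}).toReal)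
        atTop (nhds (u ^ (-α))))
    -- the normalizing sequence
    (a : ℕ → ℝ) (ha : ∀ n, 0 < a n)
    (han : Tendsto (fun n : ℕ => (n : ℝ) * (P {ω | a n < |X 1 ω|}).toReal)
      atTop (nhds 1))
    (δ : ℝ) (hδ : 0 < δ) :
    Tendsto (fun u : ℝ =>
      limsup (fun n : ℕ =>
        (P {ω | ∃ k : ℕ, 1 ≤ k ∧ k ≤ n ∧ δ <
          |∑ i ∈ Finset.Icc 1 k,
            ((if |X (i : ℤ) ω| ≤ u * a n then X (i : ℤ) ω / a n else 0)
              - ∫ ω', (if |X (i : ℤ) ω'| ≤ u * a n then X (i : ℤ) ω' / a n else 0) ∂P)|}).toReal)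
      atTop) (nhdsWithin 0 (Set.Ioi 0)) (nhds 0) := by
  classical
  set T : ℝ → ℝ := fun x => (P {ω | x < |X 1 ω|}).toReal with hTdef
  have hTnn : ∀ x, 0 ≤ T x := fun x => ENNReal.toReal_nonneg
  have hTanti : Antitone T := fun x y hxy =>
    ENNReal.toReal_mono (measure_ne_top P _)
      (measure_mono fun ω hω => lt_of_le_of_lt hxy hω)
  have hTpos : ∀ x, 0 < x → 0 < T x := fun x hx =>
    ENNReal.toReal_pos (hpos x hx).ne' (measure_ne_top P _)
  have hP1 : ∀ s : Set Ω, (P s).toReal ≤ 1 := by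
    intro s
    have h := prob_le_one (μ := P) (s := s)
    have := ENNReal.toReal_mono (by norm_num) h
    simpa using this
  -- equality of marginal laws
  have hmap : ∀ i : ℤ, Measure.map (X i) P = Measure.map (X 1) P := by
    intro i
    have h := hstat (i - 1) 1
    have hmeasg : ∀ k : ℤ, Measurable fun ω => fun j : Fin 1 => X (1 + k + (j : ℤ)) ω :=
      fun k => measurable_pi_lambda _ fun j => hXmeas _
    have h2 := congrArg (Measure.map fun v : Fin 1 → ℝ => v 0) h
    rw [Measure.map_map (measurable_pi_apply 0) (hmeasg (i - 1)),
        Measure.map_map (measurable_pi_apply 0)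
          (measurable_pi_lambda _ fun j => hXmeas _)] at h2
    have e1 : ((fun v : Fin 1 → ℝ => v 0) ∘
        (fun ω => fun j : Fin 1 => X (1 + (i - 1) + (j : ℤ)) ω)) = X i := by
      funext ω
      show X (1 + (i - 1) + ((0 : Fin 1) : ℤ)) ω = X i ω
      norm_num
    have e2 : ((fun v : Fin 1 → ℝ => v 0) ∘
        (fun ω => fun j : Fin 1 => X (1 + (j : ℤ)) ω)) = X 1 := by
      funext ω
      show X (1 + ((0 : Fin 1) : ℤ)) ω = X 1 ω
      norm_num
    rwa [e1, e2] at h2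
  -- T (a n) → 0 and a n → ∞
  have hTa0 : Tendsto (fun n : ℕ => T (a n)) atTop (nhds 0) := by
    have h1 : Tendsto (fun n : ℕ => ((n : ℝ) * T (a n)) * (n : ℝ)⁻¹) atTop (nhds 0) := by
      simpa using han.mul tendsto_inv_atTop_nhds_zero_nat
    refine h1.congr' ?_
    filter_upwards [eventually_ge_atTop 1] with n hn
    have hn0 : (n : ℝ) ≠ 0 := Nat.cast_ne_zero.mpr (by omega)
    field_simp [hn0]
    try ring
  have haT : Tendsto a atTop atTop := by
    rw [tendsto_atTop]
    intro M
    have hM' : (0:ℝ) < max M 1 := lt_of_lt_of_le one_pos (le_max_right _ _)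
    filter_upwards [hTa0.eventually_lt_const (hTpos _ hM')] with n hn
    by_contra h
    push_neg at h
    have : T (max M 1) ≤ T (a n) := hTanti (le_trans h.le (le_max_left _ _))
    linarith
  -- n * T (v * a n) → v ^ (-α)
  have hnaT : ∀ v : ℝ, 0 < v →
      Tendsto (fun n : ℕ => (n : ℝ) * T (v * a n)) atTop (nhds (v ^ (-α))) := by
    intro v hv
    have h1 : Tendsto (fun n : ℕ => T (v * a n) / T (a n)) atTop (nhds (v ^ (-α))) :=
      (hrv v hv).comp haT
    have h2 := h1.mul han
    rw [mul_one] at h2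
    refine h2.congr fun n => ?_
    have hTa : T (a n) ≠ 0 := (hTpos _ (ha n)).ne'
    field_simp [hTa]
    try ring
  -- lower doubling bound and x * T x → ∞, hence n / a n → 0
  have hhalf : (1:ℝ)/2 < (2:ℝ) ^ (-α) := by
    have h1 : (2:ℝ) ^ (-1:ℝ) < (2:ℝ) ^ (-α) :=
      Real.rpow_lt_rpow_of_exponent_lt one_lt_two (by linarith)
    rwa [Real.rpow_neg_one, show ((2:ℝ)⁻¹ = 1/2) by norm_num] at h1
  have hna : Tendsto (fun n : ℕ => (n : ℝ) / a n) atTop (nhds 0) := by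
    set r : ℝ := ((2:ℝ) ^ (-α) + 1/2)/2 with hrdef
    have hr1 : 1 < 2 * r := by rw [hrdef]; linarith
    have hrlt : r < (2:ℝ) ^ (-α) := by rw [hrdef]; linarith
    have hev := (hrv 2 two_pos).eventually_const_lt hrlt
    rw [eventually_atTop] at hev
    obtain ⟨x2', hx2'⟩ := hev
    have hx2pos : (0:ℝ) < max x2' 1 := lt_of_lt_of_le one_pos (le_max_right _ _)
    have hdbl : ∀ x, max x2' 1 ≤ x → r * T x ≤ T (2 * x) := by
      intro x hx
      have hx0 : 0 < x := lt_of_lt_of_le hx2pos hx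
      have h := hx2' x (le_trans (le_max_left _ _) hx)
      exact ((lt_div_iff₀ (hTpos x hx0)).mp h).le
    have hxT := doubling_atTop hTanti hx2pos hTpos hr1 hdbl
    have hax : Tendsto (fun n : ℕ => a n * T (a n)) atTop atTop := hxT.comp haT
    have h := han.div_atTop hax
    refine h.congr fun n => ?_
    have hT0 : T (a n) ≠ 0 := (hTpos _ (ha n)).ne'
    field_simp [hT0, (ha n).ne']
    try ring
  -- upper halving bound
  have hLh2 : (2:ℝ) ^ (α:ℝ) < 2 := by
    have := Real.rpow_lt_rpow_of_exponent_lt one_lt_two hα1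
    rwa [Real.rpow_one] at this
  have hLhpos : (0:ℝ) < (2:ℝ) ^ (α:ℝ) := Real.rpow_pos_of_pos two_pos _
  set K : ℝ := ((2:ℝ) ^ (α:ℝ) + 2)/2 with hKdef
  have hK0 : 0 < K := by rw [hKdef]; linarith
  have hK2 : K < 2 := by rw [hKdef]; linarith
  have hLhK : (2:ℝ) ^ (α:ℝ) < K := by rw [hKdef]; linarith
  have hhalfrv : Tendsto (fun x : ℝ => T ((1/2) * x) / T x) atTop (nhds ((2:ℝ) ^ (α:ℝ))) := by
    have h := hrv (1/2) (by norm_num)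
    have he : ((1:ℝ)/2) ^ (-α) = (2:ℝ) ^ (α:ℝ) := by
      rw [show ((1:ℝ)/2) = (2:ℝ)⁻¹ by norm_num, Real.inv_rpow (by norm_num),
          Real.rpow_neg (by norm_num), inv_inv]
    rwa [he] at h
  have hchainex : ∃ x1 : ℝ, 0 < x1 ∧ ∀ x, x1 ≤ x → T (x/2) ≤ K * T x := by
    have hev := hhalfrv.eventually_lt_const hLhK
    rw [eventually_atTop] at hev
    obtain ⟨x1', hx1'⟩ := hev
    refine ⟨max x1' 1, lt_of_lt_of_le one_pos (le_max_right _ _), ?_⟩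
    intro x hx
    have hx0 : 0 < x := lt_of_lt_of_le (lt_of_lt_of_le one_pos (le_max_right _ _)) hx
    have h := hx1' x (le_trans (le_max_left _ _) hx)
    rw [show (1:ℝ)/2 * x = x/2 by ring] at h
    exact ((div_lt_iff₀ (hTpos x hx0)).mp h).le
  obtain ⟨x1, hx1pos, hchain⟩ := hchainex
  set c : ℝ := K/(2-K) with hcdef
  have hcnn : 0 ≤ c := by
    rw [hcdef]; apply div_nonneg hK0.le; linarith
  -- the key estimate for each u > 0 and n
  have hkey : ∀ u : ℝ, 0 < u → ∀ n : ℕ,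
      (P {ω | ∃ k : ℕ, 1 ≤ k ∧ k ≤ n ∧ δ <
        |∑ i ∈ Finset.Icc 1 k,
          ((if |X (i : ℤ) ω| ≤ u * a n then X (i : ℤ) ω / a n else 0)
            - ∫ ω', (if |X (i : ℤ) ω'| ≤ u * a n then X (i : ℤ) ω' / a n else 0) ∂P)|}).toReal
      ≤ (2/δ) * (x1 * ((n : ℝ) / a n) + 4*c*u*((n : ℝ) * T (u * a n))) := by
    intro u hu n
    have h1 := key_estimate P X hXmeas hmap u (a n) δ hu (ha n) hδ n
    have hW : ∫ ω, |if |X 1 ω| ≤ u * a n then X 1 ω / a n else 0| ∂P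
        = (∫ ω, (if |X 1 ω| ≤ u * a n then |X 1 ω| else 0) ∂P) / a n := by
      have hpt : ∀ ω, |if |X 1 ω| ≤ u * a n then X 1 ω / a n else 0|
          = (if |X 1 ω| ≤ u * a n then |X 1 ω| else 0) / a n := by
        intro ω
        by_cases h : |X 1 ω| ≤ u * a n
        · rw [if_pos h, if_pos h, abs_div, abs_of_pos (ha n)]
        · rw [if_neg h, if_neg h, abs_zero, zero_div]
      simp_rw [hpt]
      exact integral_div _ _
    have h2 := trunc_bound P (X 1) (hXmeas 1) x1 K hx1pos hK0 hK2
      (fun x hx => hchain x hx) (u * a n) (mul_pos hu (ha n))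
    have hInn : (0:ℝ) ≤ ∫ ω, (if |X 1 ω| ≤ u * a n then |X 1 ω| else 0) ∂P := by
      apply integral_nonneg
      intro ω
      by_cases h : |X 1 ω| ≤ u * a n <;> simp [h, abs_nonneg]
    calc (P _).toReal
        ≤ (2 * n / δ) * ∫ ω, |if |X 1 ω| ≤ u * a n then X 1 ω / a n else 0| ∂P := h1
      _ ≤ (2 * n / δ) * ((x1 + 4*c*(u * a n) * T (u * a n)) / a n) := by
          rw [hW]
          refine mul_le_mul_of_nonneg_left ?_ (div_nonneg (by positivity) hδ.le)
          exact (div_le_div_iff_of_pos_right (ha n)).mpr h2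
      _ = (2/δ) * (x1 * ((n : ℝ) / a n) + 4*c*u*((n : ℝ) * T (u * a n))) := by
          field_simp [hδ.ne', (ha n).ne']
  -- limit of the bound sequence for fixed u
  have hb : ∀ u : ℝ, 0 < u →
      Tendsto (fun n : ℕ => (2/δ) * (x1 * ((n : ℝ) / a n) + 4*c*u*((n : ℝ) * T (u * a n))))
        atTop (nhds ((2/δ) * (4*c*u*(u ^ (-α))))) := by
    intro u hu
    have h := ((hna.const_mul x1).add ((hnaT u hu).const_mul (4*c*u))).const_mul (2/δ)
    simpa using h
  have upper : ∀ u : ℝ, 0 < u →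
      limsup (fun n : ℕ =>
        (P {ω | ∃ k : ℕ, 1 ≤ k ∧ k ≤ n ∧ δ <
          |∑ i ∈ Finset.Icc 1 k,
            ((if |X (i : ℤ) ω| ≤ u * a n then X (i : ℤ) ω / a n else 0)
              - ∫ ω', (if |X (i : ℤ) ω'| ≤ u * a n then X (i : ℤ) ω' / a n else 0) ∂P)|}).toReal)
        atTop ≤ (2/δ) * (4*c*u*(u ^ (-α))) := by
    intro u hu
    have h1 := limsup_le_limsup (Eventually.of_forall (hkey u hu))
      (isCoboundedUnder_le_of_le atTop (fun n => ENNReal.toReal_nonneg))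
      ((hb u hu).isBoundedUnder_le)
    exact h1.trans_eq ((hb u hu).limsup_eq)
  have hgt : Tendsto (fun u : ℝ => (2/δ) * (4*c*u*(u ^ (-α))))
      (nhdsWithin 0 (Set.Ioi 0)) (nhds 0) := by
    have h1 : Tendsto (fun u : ℝ => u ^ ((1:ℝ) - α)) (nhdsWithin 0 (Set.Ioi 0)) (nhds 0) := by
      have hc : ContinuousAt (fun u : ℝ => u ^ ((1:ℝ) - α)) 0 :=
        Real.continuousAt_rpow_const 0 _ (Or.inr (by linarith))
      have h : Tendsto (fun u : ℝ => u ^ ((1:ℝ) - α)) (nhdsWithin 0 (Set.Ioi 0))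
          (nhds ((0:ℝ) ^ ((1:ℝ) - α))) := hc.tendsto.mono_left nhdsWithin_le_nhds
      rwa [Real.zero_rpow (by linarith : (1:ℝ) - α ≠ 0)] at h
    have h2 := h1.const_mul ((2/δ) * (4*c))
    rw [mul_zero] at h2
    refine h2.congr' ?_
    filter_upwards [eventually_mem_nhdsWithin] with u hu
    have hu' : (0:ℝ) < u := hu
    rw [show (1:ℝ) - α = 1 + (-α) by ring, Real.rpow_add hu', Real.rpow_one]
    ring
  refine tendsto_of_tendsto_of_tendsto_of_le_of_le' tendsto_const_nhds hgt ?_ ?_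
  · refine Eventually.of_forall fun u => le_limsup_of_frequently_le
      (Frequently.of_forall fun n => ENNReal.toReal_nonneg) (isBoundedUnder_of ⟨1, fun n => hP1 _⟩)
  · filter_upwards [eventually_mem_nhdsWithin] with u hu
    exact upper u hu
end

section
/- Let (X_n)_{n∈ℤ} be a strictly stationary sequence of random variables, each regularly varying with index α ∈ (0,1), and let (a_n) be a positive sequence with n P(|X_1|>a_n) → 1. Then for every δ>0 and every u>0, limsup_{n→∞} P( max_{1≤k≤n} | Σ_{i=1}^k ( (X_i/a_n) 1{|X_i| ≤ u a_n} − E[(X_i/a_n) 1{|X_i| ≤ u a_n}] ) | > δ ) ≤ 2 δ^{−1} (α/(1−α)) u^{1−α}. -/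
open MeasureTheory Filter Set

private lemma potter_iter {T : ℝ → ℝ} {β x1 : ℝ} (hx1 : 0 < x1)
    (hstep : ∀ x, x1 ≤ x → T x ≤ 2 ^ β * T (2 * x)) :
    ∀ k : ℕ, ∀ x, x1 ≤ x → T x ≤ (2 ^ β) ^ k * T (2 ^ k * x) := by
  intro k
  induction k with
  | zero => intro x hx; simpa using le_refl (T x)
  | succ m ih =>
    intro x hx
    have hx0 : 0 < x := lt_of_lt_of_le hx1 hx
    have h2x : x1 ≤ 2 * x := by linarith
    calc T x ≤ 2 ^ β * T (2 * x) := hstep x hx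
      _ ≤ 2 ^ β * ((2 ^ β) ^ m * T (2 ^ m * (2 * x))) :=
          mul_le_mul_of_nonneg_left (ih (2 * x) h2x) (Real.rpow_nonneg (by norm_num) _)
      _ = (2 ^ β) ^ (m + 1) * T (2 ^ (m + 1) * x) := by
          rw [show (2:ℝ) ^ m * (2 * x) = 2 ^ (m + 1) * x by ring]; ring

private lemma potter {T : ℝ → ℝ} {β x1 : ℝ} (hx1 : 0 < x1) (hβ : 0 ≤ β)
    (hanti : Antitone T) (hnn : ∀ x, 0 ≤ T x)
    (hstep : ∀ x, x1 ≤ x → T x ≤ 2 ^ β * T (2 * x)) :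
    ∀ s x : ℝ, x1 ≤ s → s ≤ x → T s ≤ 2 ^ β * (x / s) ^ β * T x := by
  intro s x hs hsx
  have hs0 : 0 < s := lt_of_lt_of_le hx1 hs
  have hx0 : 0 < x := lt_of_lt_of_le hs0 hsx
  have hex : ∃ k : ℕ, x ≤ 2 ^ k * s := by
    obtain ⟨k, hk⟩ := pow_unbounded_of_one_lt (x / s) (one_lt_two (α := ℝ))
    refine ⟨k, ?_⟩
    rw [div_lt_iff₀ hs0] at hk
    linarith
  have hone : (1:ℝ) ≤ 2 ^ β := by
    calc (1:ℝ) = 2 ^ (0:ℝ) := by simp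
      _ ≤ 2 ^ β := Real.rpow_le_rpow_of_exponent_le one_le_two hβ
  have hspec := Nat.find_spec hex
  rcases Nat.eq_zero_or_pos (Nat.find hex) with h0 | hposk
  · rw [h0] at hspec
    simp only [pow_zero, one_mul] at hspec
    have hxs : x = s := le_antisymm hspec hsx
    subst hxs
    have : (x / x) ^ β = 1 := by rw [div_self hx0.ne']; exact Real.one_rpow β
    rw [this]
    nlinarith [hnn x]
  · obtain ⟨m, hm⟩ : ∃ m, Nat.find hex = m + 1 := ⟨Nat.find hex - 1, (Nat.succ_pred_eq_of_pos hposk).symm⟩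
    have hmin : ¬ x ≤ 2 ^ m * s := Nat.find_min hex (by omega)
    push_neg at hmin
    rw [hm] at hspec
    have hTle : T (2 ^ (m + 1) * s) ≤ T x := hanti hspec
    have hcoef : ((2:ℝ) ^ β) ^ (m + 1) ≤ 2 ^ β * (x / s) ^ β := by
      have h1 : ((2:ℝ) ^ β) ^ (m + 1) = ((2:ℝ) ^ (m + 1) : ℝ) ^ β := by
        rw [← Real.rpow_natCast ((2:ℝ) ^ β) (m + 1), ← Real.rpow_natCast (2:ℝ) (m + 1),
          ← Real.rpow_mul (by norm_num), ← Real.rpow_mul (by norm_num), mul_comm]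
      rw [h1]
      have h2 : ((2:ℝ) ^ (m + 1) : ℝ) ≤ 2 * (x / s) := by
        have : (2:ℝ) ^ m < x / s := by rw [lt_div_iff₀ hs0]; linarith
        rw [pow_succ]
        linarith
      calc ((2:ℝ) ^ (m + 1) : ℝ) ^ β ≤ (2 * (x / s)) ^ β :=
            Real.rpow_le_rpow (by positivity) h2 hβ
        _ = 2 ^ β * (x / s) ^ β := Real.mul_rpow (by norm_num) (by positivity)
    calc T s ≤ ((2:ℝ) ^ β) ^ (m + 1) * T (2 ^ (m + 1) * s) := potter_iter hx1 hstep (m + 1) s hs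
      _ ≤ ((2:ℝ) ^ β) ^ (m + 1) * T x := mul_le_mul_of_nonneg_left hTle (by positivity)
      _ ≤ 2 ^ β * (x / s) ^ β * T x := mul_le_mul_of_nonneg_right hcoef (hnn x)
/-- for a strictly stationary sequence of regularly varying random
variables with index `α ∈ (0,1)`, the truncated centered partial-sum maxima satisfy
the quantitative bound `limsup_n P(max_k |...| > δ) ≤ 2 δ⁻¹ (α/(1−α)) u^{1−α}`. -/
theorem truncated_sum_limsup_bound
    {Ω : Type*} [MeasurableSpace Ω] (P : Measure Ω) [IsProbabilityMeasure P]
    (X : ℤ → Ω → ℝ) (hXmeas : ∀ i, Measurable (X i))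
    -- strict stationarity
    (hstat : ∀ (k : ℤ) (m : ℕ),
      Measure.map (fun ω => fun j : Fin m => X (1 + k + (j : ℤ)) ω) P
        = Measure.map (fun ω => fun j : Fin m => X (1 + (j : ℤ)) ω) P)
    (α : ℝ) (hα : 0 < α) (hα1 : α < 1)
    -- X₁ is regularly varying with index α
    (hpos : ∀ x : ℝ, 0 < x → 0 < P {ω | x < |X 1 ω|})
    (hrv : ∀ u : ℝ, 0 < u →
      Tendsto (fun x : ℝ =>
          (P {ω | u * x < |X 1 ω|}).toReal / (P {ω | x < |X 1 ω|}).toReal)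
        atTop (nhds (u ^ (-α))))
    -- the normalizing sequence
    (a : ℕ → ℝ) (ha : ∀ n, 0 < a n)
    (han : Tendsto (fun n : ℕ => (n : ℝ) * (P {ω | a n < |X 1 ω|}).toReal)
      atTop (nhds 1))
    (δ u : ℝ) (hδ : 0 < δ) (hu : 0 < u) :
    limsup (fun n : ℕ =>
        (P {ω | ∃ k : ℕ, 1 ≤ k ∧ k ≤ n ∧ δ <
          |∑ i ∈ Finset.Icc 1 k,
            ((if |X (i : ℤ) ω| ≤ u * a n then X (i : ℤ) ω / a n else 0)
              - ∫ ω', (if |X (i : ℤ) ω'| ≤ u * a n then X (i : ℤ) ω' / a n else 0) ∂P)|}).toReal)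
      atTop
      ≤ 2 * δ⁻¹ * (α / (1 - α)) * u ^ (1 - α) := by
  classical
  set T : ℝ → ℝ := fun x => (P {ω | x < |X 1 ω|}).toReal with hT_def
  have hfin : ∀ x : ℝ, P {ω | x < |X 1 ω|} ≠ ⊤ := fun x => measure_ne_top _ _
  have hTanti : Antitone T := fun s t hst =>
    ENNReal.toReal_mono (hfin _) (measure_mono (fun ω hω => lt_of_le_of_lt hst hω))
  have hTnn : ∀ x, 0 ≤ T x := fun x => ENNReal.toReal_nonneg
  have hTle1 : ∀ x, T x ≤ 1 := fun x => by
    have h := prob_le_one (μ := P) (s := {ω | x < |X 1 ω|})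
    simpa using ENNReal.toReal_mono (by norm_num) h
  have hTpos : ∀ x, 0 < x → 0 < T x := fun x hx => ENNReal.toReal_pos (hpos x hx).ne' (hfin x)
  have hTmeas : Measurable T := hTanti.measurable
  -- a n → ∞
  have haT : Tendsto a atTop atTop := by
    rw [tendsto_atTop]
    intro M
    set M' := max M 1 with hM'def
    have hM' : (0:ℝ) < M' := lt_of_lt_of_le one_pos (le_max_right _ _)
    have hTM : 0 < T M' := hTpos _ hM'
    have h2 : ∀ᶠ n : ℕ in atTop, (n : ℝ) * T (a n) < 2 := han.eventually_lt_const one_lt_two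
    have h3 : ∀ᶠ n : ℕ in atTop, (2:ℝ) / T M' < (n:ℝ) :=
      tendsto_natCast_atTop_atTop.eventually_gt_atTop _
    filter_upwards [h2, h3] with n hn2 hn3
    by_contra hcon
    push_neg at hcon
    have hle : T M' ≤ T (a n) := hTanti (le_of_lt (lt_of_lt_of_le hcon (le_max_left _ _)))
    have h4 : (n:ℝ) * T M' ≤ (n:ℝ) * T (a n) :=
      mul_le_mul_of_nonneg_left hle (Nat.cast_nonneg n)
    rw [div_lt_iff₀ hTM] at hn3
    linarith
  have hratio : ∀ v : ℝ, 0 < v →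
      Tendsto (fun n : ℕ => T (v * a n) / T (a n)) atTop (nhds (v ^ (-α))) :=
    fun v hv => (hrv v hv).comp haT
  have hkey : ∀ v : ℝ, 0 < v →
      Tendsto (fun n : ℕ => (n : ℝ) * T (a n * v)) atTop (nhds (v ^ (-α))) := by
    intro v hv
    have h := (hratio v hv).mul han
    rw [mul_one] at h
    refine h.congr (fun n => ?_)
    have hne : T (a n) ≠ 0 := (hTpos _ (ha n)).ne'
    rw [mul_comm (a n) v]
    field_simp
    ring
  -- Potter-type bounds
  set β : ℝ := (1 + α) / 2 with hβdef
  have hβα : α < β := by rw [hβdef]; linarith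
  have hβ1 : β < 1 := by rw [hβdef]; linarith
  have hβ0 : 0 < β := by rw [hβdef]; linarith
  have hstep0 : ∃ x1 : ℝ, 1 ≤ x1 ∧ ∀ x, x1 ≤ x → T x ≤ 2 ^ β * T (2 * x) := by
    have h := hrv (1/2) (by norm_num)
    have hlt : ((1:ℝ)/2) ^ (-α) < 2 ^ β := by
      have h1 : ((1:ℝ)/2) ^ (-α) = 2 ^ α := by
        rw [one_div, ← Real.rpow_neg_one (2:ℝ), ← Real.rpow_mul (by norm_num : (0:ℝ) ≤ 2)]
        norm_num
      rw [h1]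
      exact Real.rpow_lt_rpow_left_iff one_lt_two |>.mpr hβα
    have hev := h.eventually_lt_const hlt
    rw [eventually_atTop] at hev
    obtain ⟨x0, hx0⟩ := hev
    refine ⟨max x0 1, le_max_right _ _, fun x hx => ?_⟩
    have hx1' : (1:ℝ) ≤ x := le_trans (le_max_right _ _) hx
    have h2x : x0 ≤ 2 * x := by
      have := le_trans (le_max_left x0 1) hx
      linarith
    have hlt2 := hx0 (2 * x) h2x
    rw [show (1:ℝ)/2 * (2 * x) = x by ring] at hlt2
    have hpos2 : 0 < T (2 * x) := hTpos _ (by linarith)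
    rw [div_lt_iff₀ hpos2] at hlt2
    linarith
  obtain ⟨x1, hx11, hstep⟩ := hstep0
  have hx10 : (0:ℝ) < x1 := lt_of_lt_of_le one_pos hx11
  have hP2 := potter hx10 hβ0.le hTanti hTnn hstep
  -- eventual regime
  have hev1 : ∀ᶠ n : ℕ in atTop, x1 ≤ a n := haT.eventually_ge_atTop x1
  have hev2 : ∀ᶠ n : ℕ in atTop, (n:ℝ) * T (a n) ≤ 2 :=
    (han.eventually_lt_const one_lt_two).mono fun n h => h.le
  obtain ⟨N, hN⟩ := eventually_atTop.mp (hev1.and hev2)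
  set K : ℝ := 2 * 2 ^ β / (T x1 * x1 ^ β) with hKdef
  have hTx1 : 0 < T x1 := hTpos _ hx10
  have hx1β : (0:ℝ) < x1 ^ β := Real.rpow_pos_of_pos hx10 β
  have hK0 : 0 < K := by
    rw [hKdef]
    positivity
  have hKn : ∀ n, N ≤ n → (n:ℝ) ≤ K * (a n) ^ β := by
    intro n hn
    obtain ⟨hax1, hTa2⟩ := hN n hn
    have h1 : T x1 ≤ 2 ^ β * (a n / x1) ^ β * T (a n) := hP2 x1 (a n) le_rfl hax1
    have h2 : (n:ℝ) * T x1 ≤ 2 ^ β * (a n / x1) ^ β * ((n:ℝ) * T (a n)) := by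
      have := mul_le_mul_of_nonneg_left h1 (Nat.cast_nonneg (α := ℝ) n)
      calc (n:ℝ) * T x1 ≤ (n:ℝ) * (2 ^ β * (a n / x1) ^ β * T (a n)) := this
        _ = 2 ^ β * (a n / x1) ^ β * ((n:ℝ) * T (a n)) := by ring
    have hc : (0:ℝ) ≤ 2 ^ β * (a n / x1) ^ β :=
      mul_nonneg (Real.rpow_nonneg (by norm_num) _)
        (Real.rpow_nonneg (div_nonneg (ha n).le hx10.le) _)
    have h3 : (n:ℝ) * T x1 ≤ 2 ^ β * (a n / x1) ^ β * 2 :=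
      le_trans h2 (mul_le_mul_of_nonneg_left hTa2 hc)
    have hdiv : (a n / x1) ^ β = (a n) ^ β / x1 ^ β := Real.div_rpow (ha n).le hx10.le β
    rw [hdiv] at h3
    have h4 : (n:ℝ) * (T x1 * x1 ^ β) ≤ 2 * 2 ^ β * a n ^ β := by
      have h5 := mul_le_mul_of_nonneg_right h3 hx1β.le
      have h6 : 2 ^ β * (a n ^ β / x1 ^ β) * 2 * x1 ^ β = 2 * 2 ^ β * a n ^ β := by
        field_simp
      rw [h6] at h5
      calc (n:ℝ) * (T x1 * x1 ^ β) = (n:ℝ) * T x1 * x1 ^ β := by ring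
        _ ≤ 2 * 2 ^ β * a n ^ β := h5
    rw [hKdef, div_mul_eq_mul_div, le_div_iff₀ (mul_pos hTx1 hx1β)]
    calc (n:ℝ) * (T x1 * x1 ^ β) ≤ 2 * 2 ^ β * a n ^ β := h4
      _ = 2 * 2 ^ β * a n ^ β := rfl
  set C3 : ℝ := 2 * 2 ^ β + 2 * u ^ β + K * x1 ^ β with hC3def
  have hdom : ∀ n, N ≤ n → ∀ v : ℝ, v ∈ Ioc (0:ℝ) u →
      (n:ℝ) * T (a n * v) ≤ C3 * v ^ (-β) := by
    intro n hn v hv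
    obtain ⟨hv0, hvu⟩ := hv
    obtain ⟨hax1, hTa2⟩ := hN n hn
    have ha0 := ha n
    have hvβ : (0:ℝ) < v ^ β := Real.rpow_pos_of_pos hv0 β
    have hvnegβ : (0:ℝ) < v ^ (-β) := Real.rpow_pos_of_pos hv0 (-β)
    have hvmul : v ^ β * v ^ (-β) = 1 := by
      rw [← Real.rpow_add hv0]; simp
    have hnn2 : (0:ℝ) ≤ 2 * 2 ^ β := by positivity
    have hnn3 : (0:ℝ) ≤ 2 * u ^ β := by positivity
    have hnn4 : (0:ℝ) ≤ K * x1 ^ β := le_of_lt (mul_pos hK0 hx1β)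
    by_cases hcase1 : a n * v < x1
    · -- small values regime
      have h1 : (n:ℝ) * T (a n * v) ≤ (n:ℝ) :=
        calc (n:ℝ) * T (a n * v) ≤ (n:ℝ) * 1 :=
              mul_le_mul_of_nonneg_left (hTle1 _) (Nat.cast_nonneg n)
          _ = (n:ℝ) := mul_one _
      have h2 : (n:ℝ) ≤ K * (a n) ^ β := hKn n hn
      have h3 : (a n : ℝ) ^ β = (a n * v) ^ β * v ^ (-β) := by
        rw [Real.mul_rpow ha0.le hv0.le, mul_assoc, hvmul, mul_one]
      have h4 : (a n * v) ^ β ≤ x1 ^ β :=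
        Real.rpow_le_rpow (by positivity) hcase1.le hβ0.le
      have h5 : (n:ℝ) * T (a n * v) ≤ K * x1 ^ β * v ^ (-β) := by
        calc (n:ℝ) * T (a n * v) ≤ K * (a n) ^ β := le_trans h1 h2
          _ = K * ((a n * v) ^ β * v ^ (-β)) := by rw [← h3]
          _ ≤ K * (x1 ^ β * v ^ (-β)) := by
              refine mul_le_mul_of_nonneg_left ?_ hK0.le
              exact mul_le_mul_of_nonneg_right h4 hvnegβ.le
          _ = K * x1 ^ β * v ^ (-β) := by ring
      have hC3 : C3 * v ^ (-β) = 2 * 2 ^ β * v ^ (-β) + 2 * u ^ β * v ^ (-β) + K * x1 ^ β * v ^ (-β) := by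
        rw [hC3def]; ring
      rw [hC3]
      linarith [mul_nonneg hnn2 hvnegβ.le, mul_nonneg hnn3 hvnegβ.le]
    · push_neg at hcase1
      by_cases hcase2 : v ≤ 1
      · -- Potter regime
        have hle : a n * v ≤ a n := mul_le_of_le_one_right ha0.le hcase2
        have h1 : T (a n * v) ≤ 2 ^ β * (a n / (a n * v)) ^ β * T (a n) :=
          hP2 (a n * v) (a n) hcase1 hle
        have h2 : a n / (a n * v) = v⁻¹ := by
          field_simp
        have h3 : (v⁻¹ : ℝ) ^ β = v ^ (-β) := by
          rw [← Real.rpow_neg_one v, ← Real.rpow_mul hv0.le]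
          norm_num
        rw [h2, h3] at h1
        have h4 : (n:ℝ) * T (a n * v) ≤ 2 ^ β * v ^ (-β) * ((n:ℝ) * T (a n)) := by
          calc (n:ℝ) * T (a n * v) ≤ (n:ℝ) * (2 ^ β * v ^ (-β) * T (a n)) :=
                mul_le_mul_of_nonneg_left h1 (Nat.cast_nonneg n)
            _ = 2 ^ β * v ^ (-β) * ((n:ℝ) * T (a n)) := by ring
        have h5 : (n:ℝ) * T (a n * v) ≤ 2 * 2 ^ β * v ^ (-β) := by
          have h6 : 2 ^ β * v ^ (-β) * ((n:ℝ) * T (a n)) ≤ 2 ^ β * v ^ (-β) * 2 :=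
            mul_le_mul_of_nonneg_left hTa2 (by positivity)
          calc (n:ℝ) * T (a n * v) ≤ 2 ^ β * v ^ (-β) * 2 := le_trans h4 h6
            _ = 2 * 2 ^ β * v ^ (-β) := by ring
        have hC3 : C3 * v ^ (-β) = 2 * 2 ^ β * v ^ (-β) + 2 * u ^ β * v ^ (-β) + K * x1 ^ β * v ^ (-β) := by
          rw [hC3def]; ring
        rw [hC3]
        linarith [mul_nonneg hnn3 hvnegβ.le, mul_nonneg hnn4 hvnegβ.le]
      · -- large values regime
        push_neg at hcase2
        have hle : a n ≤ a n * v := le_mul_of_one_le_right ha0.le hcase2.le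
        have h1 : T (a n * v) ≤ T (a n) := hTanti hle
        have h2 : (n:ℝ) * T (a n * v) ≤ 2 :=
          calc (n:ℝ) * T (a n * v) ≤ (n:ℝ) * T (a n) :=
                mul_le_mul_of_nonneg_left h1 (Nat.cast_nonneg n)
            _ ≤ 2 := hTa2
        have h3 : (2:ℝ) = 2 * (v ^ β * v ^ (-β)) := by rw [hvmul]; ring
        have h4 : v ^ β ≤ u ^ β := Real.rpow_le_rpow hv0.le hvu hβ0.le
        have h5 : (2:ℝ) ≤ 2 * u ^ β * v ^ (-β) := by
          have h6 : 2 * (v ^ β * v ^ (-β)) ≤ 2 * (u ^ β * v ^ (-β)) := by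
            refine mul_le_mul_of_nonneg_left ?_ (by norm_num)
            exact mul_le_mul_of_nonneg_right h4 hvnegβ.le
          calc (2:ℝ) = 2 * (v ^ β * v ^ (-β)) := by rw [hvmul]; ring
            _ ≤ 2 * (u ^ β * v ^ (-β)) := h6
            _ = 2 * u ^ β * v ^ (-β) := by ring
        have hC3 : C3 * v ^ (-β) = 2 * 2 ^ β * v ^ (-β) + 2 * u ^ β * v ^ (-β) + K * x1 ^ β * v ^ (-β) := by
          rw [hC3def]; ring
        rw [hC3]
        linarith [mul_nonneg hnn2 hvnegβ.le, mul_nonneg hnn4 hvnegβ.le]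
  -- dominated convergence
  have hGmeas : ∀ n : ℕ, Measurable (fun v : ℝ => (n:ℝ) * T (a n * v)) := fun n =>
    (hTmeas.comp (measurable_id.const_mul (a n))).const_mul _
  have hboundint : IntegrableOn (fun v : ℝ => C3 * v ^ (-β)) (Ioc 0 u) := by
    have h1 : IntervalIntegrable (fun v : ℝ => v ^ (-β)) volume 0 u :=
      intervalIntegral.intervalIntegrable_rpow' (by linarith)
    rw [intervalIntegrable_iff_integrableOn_Ioc_of_le hu.le] at h1
    exact h1.const_mul C3
  have hJ : Tendsto (fun n : ℕ => ∫ v in Ioc (0:ℝ) u, (n:ℝ) * T (a n * v))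
      atTop (nhds (∫ v in Ioc (0:ℝ) u, v ^ (-α))) := by
    rw [← tendsto_add_atTop_iff_nat N]
    refine tendsto_integral_of_dominated_convergence (fun v => C3 * v ^ (-β))
      (fun m => ((hGmeas (m + N)).aestronglyMeasurable)) hboundint ?_ ?_
    · intro m
      rw [ae_restrict_iff' measurableSet_Ioc]
      refine Eventually.of_forall (fun v hv => ?_)
      have hnn : (0:ℝ) ≤ ((m + N : ℕ):ℝ) * T (a (m + N) * v) :=
        mul_nonneg (Nat.cast_nonneg _) (hTnn _)
      rw [Real.norm_eq_abs, abs_of_nonneg hnn]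
      exact hdom (m + N) (Nat.le_add_left N m) v hv
    · rw [ae_restrict_iff' measurableSet_Ioc]
      refine Eventually.of_forall (fun v hv => ?_)
      exact (hkey v hv.1).comp (tendsto_add_atTop_nat N)
  have hIval : ∫ v in Ioc (0:ℝ) u, v ^ (-α) = u ^ (1 - α) / (1 - α) := by
    have h0 : (∫ v in (0:ℝ)..u, v ^ (-α)) = ∫ v in Ioc (0:ℝ) u, v ^ (-α) :=
      intervalIntegral.integral_of_le hu.le
    rw [← h0, integral_rpow (Or.inl (by linarith : (-1:ℝ) < -α)),
      Real.zero_rpow (by linarith : -α + 1 ≠ 0)]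
    rw [show -α + 1 = 1 - α by ring]
    ring
  -- identical distribution
  have hid : ∀ i : ℤ, Measure.map (X i) P = Measure.map (X 1) P := by
    intro i
    have hF : Measurable (fun ω => fun j : Fin 1 => X (1 + (i - 1) + (j : ℤ)) ω) :=
      measurable_pi_lambda _ fun j => hXmeas _
    have hG : Measurable (fun ω => fun j : Fin 1 => X (1 + (j : ℤ)) ω) :=
      measurable_pi_lambda _ fun j => hXmeas _
    have h := congrArg (Measure.map (fun f : Fin 1 → ℝ => f 0)) (hstat (i - 1) 1)
    rw [Measure.map_map (measurable_pi_apply 0) hF,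
      Measure.map_map (measurable_pi_apply 0) hG] at h
    have e1 : ((fun f : Fin 1 → ℝ => f 0) ∘ fun ω => fun j : Fin 1 => X (1 + (i - 1) + (j : ℤ)) ω)
        = X i := by
      funext ω
      show X (1 + (i - 1) + ((0 : Fin 1) : ℤ)) ω = X i ω
      norm_num
    have e2 : ((fun f : Fin 1 → ℝ => f 0) ∘ fun ω => fun j : Fin 1 => X (1 + (j : ℤ)) ω)
        = X 1 := by
      funext ω
      show X (1 + ((0 : Fin 1) : ℤ)) ω = X 1 ω
      norm_num
    rwa [e1, e2] at h
  have hIdi : ∀ n : ℕ, ∀ i : ℤ,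
      ∫ ω, |if |X i ω| ≤ u * a n then X i ω / a n else 0| ∂P
        = ∫ ω, |if |X 1 ω| ≤ u * a n then X 1 ω / a n else 0| ∂P := by
    intro n i
    have hφmeas : Measurable (fun x : ℝ => |if |x| ≤ u * a n then x / a n else 0|) :=
      (Measurable.ite (measurableSet_le measurable_abs measurable_const)
        (measurable_id.div_const _) measurable_const).abs
    calc ∫ ω, |if |X i ω| ≤ u * a n then X i ω / a n else 0| ∂P
        = ∫ x, |if |x| ≤ u * a n then x / a n else 0| ∂(Measure.map (X i) P) :=
          (integral_map (hXmeas i).aemeasurable hφmeas.aestronglyMeasurable).symm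
      _ = ∫ x, |if |x| ≤ u * a n then x / a n else 0| ∂(Measure.map (X 1) P) := by rw [hid i]
      _ = ∫ ω, |if |X 1 ω| ≤ u * a n then X 1 ω / a n else 0| ∂P :=
          integral_map (hXmeas 1).aemeasurable hφmeas.aestronglyMeasurable
  set I : ℕ → ℝ := fun n => ∫ ω, |if |X 1 ω| ≤ u * a n then X 1 ω / a n else 0| ∂P with hIdef
  -- layer cake per n
  have hlayer : ∀ n : ℕ,
      (∫ ω, (if |X 1 ω| ≤ u * a n then |X 1 ω| else 0) ∂P)
        = (∫ t in Ioc (0:ℝ) (u * a n), T t) - (u * a n) * T (u * a n) := by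
    intro n
    set c : ℝ := u * a n with hcdef
    have hc : 0 < c := mul_pos hu (ha n)
    have hgmeas : Measurable (fun ω => if |X 1 ω| ≤ c then |X 1 ω| else 0) :=
      Measurable.ite (measurableSet_le (hXmeas 1).abs measurable_const)
        (hXmeas 1).abs measurable_const
    have hgnn : 0 ≤ᵐ[P] (fun ω => if |X 1 ω| ≤ c then |X 1 ω| else 0) :=
      ae_of_all _ (fun ω => by
        show (0:ℝ) ≤ if |X 1 ω| ≤ c then |X 1 ω| else 0
        by_cases h : |X 1 ω| ≤ c
        · rw [if_pos h]; exact abs_nonneg _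
        · rw [if_neg h])
    have hgbdd : ∀ ω, ‖if |X 1 ω| ≤ c then |X 1 ω| else 0‖ ≤ c := fun ω => by
      rw [Real.norm_eq_abs]
      by_cases h : |X 1 ω| ≤ c
      · rw [if_pos h, abs_abs]; exact h
      · rw [if_neg h, abs_zero]; exact hc.le
    have hgint : Integrable (fun ω => if |X 1 ω| ≤ c then |X 1 ω| else 0) P :=
      (integrable_const c).mono' hgmeas.aestronglyMeasurable (ae_of_all _ hgbdd)
    rw [hgint.integral_eq_integral_meas_lt hgnn]
    have hmeasval : ∀ t ∈ Ioi (0:ℝ),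
        (P {ω | t < if |X 1 ω| ≤ c then |X 1 ω| else 0}).toReal
          = (Ioc (0:ℝ) c).indicator (fun t => T t - T c) t := by
      intro t ht
      rw [mem_Ioi] at ht
      have hset : {ω | t < if |X 1 ω| ≤ c then |X 1 ω| else 0}
          = {ω | t < |X 1 ω|} \ {ω | c < |X 1 ω|} := by
        ext ω
        simp only [mem_setOf_eq, mem_diff, not_lt]
        by_cases h : |X 1 ω| ≤ c
        · rw [if_pos h]
          exact ⟨fun h' => ⟨h', h⟩, fun h' => h'.1⟩
        · rw [if_neg h]
          push_neg at h
          constructor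
          · intro h'; linarith
          · rintro ⟨h1, h2⟩; linarith
      rw [hset]
      by_cases htc : t ≤ c
      · have hsub2 : {ω | c < |X 1 ω|} ⊆ {ω | t < |X 1 ω|} :=
          fun ω hω => lt_of_le_of_lt htc hω
        rw [measure_diff hsub2
          ((measurableSet_lt measurable_const (hXmeas 1).abs).nullMeasurableSet) (hfin c),
          ENNReal.toReal_sub_of_le (measure_mono hsub2) (hfin t),
          indicator_of_mem (mem_Ioc.mpr ⟨ht, htc⟩)]
      · push_neg at htc
        have hempty : {ω | t < |X 1 ω|} \ {ω | c < |X 1 ω|} = ∅ := by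
          ext ω
          simp only [mem_diff, mem_setOf_eq, mem_empty_iff_false, iff_false, not_and, not_lt]
          intro h'; linarith
        rw [hempty, indicator_of_notMem (fun hmem => absurd hmem.2 (not_le.mpr htc))]
        simp
    simp only [measureReal_def]
    rw [setIntegral_congr_fun measurableSet_Ioi hmeasval,
      setIntegral_indicator measurableSet_Ioc,
      show Ioi (0:ℝ) ∩ Ioc 0 c = Ioc 0 c from inter_eq_self_of_subset_right Ioc_subset_Ioi_self]
    have hTint : IntegrableOn T (Ioc (0:ℝ) c) := by
      refine Integrable.mono'
        ((integrableOn_const measure_Ioc_lt_top.ne) :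
          IntegrableOn (fun _ : ℝ => (1:ℝ)) (Ioc 0 c) volume)
        hTmeas.aestronglyMeasurable (ae_of_all _ (fun t => ?_))
      rw [Real.norm_eq_abs, abs_of_nonneg (hTnn t)]
      exact hTle1 t
    rw [integral_sub hTint (integrableOn_const measure_Ioc_lt_top.ne),
      setIntegral_const, measureReal_def, Real.volume_Ioc, smul_eq_mul,
      ENNReal.toReal_ofReal (by linarith : (0:ℝ) ≤ c - 0)]
    ring
  -- change of variables per n
  have hcov : ∀ n : ℕ, ∫ t in Ioc (0:ℝ) (u * a n), T t
      = a n * ∫ v in Ioc (0:ℝ) u, T (a n * v) := by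
    intro n
    have h1 := MeasureTheory.Measure.integral_comp_mul_left ((Ioc (0:ℝ) (u * a n)).indicator T) (a n)
    have h2 : (fun v : ℝ => (Ioc (0:ℝ) (u * a n)).indicator T (a n * v))
        = (Ioc (0:ℝ) u).indicator (fun v => T (a n * v)) := by
      funext v
      by_cases hv : v ∈ Ioc (0:ℝ) u
      · rw [indicator_of_mem hv]
        have hmem : a n * v ∈ Ioc (0:ℝ) (u * a n) := by
          obtain ⟨h1', h2'⟩ := hv
          refine ⟨mul_pos (ha n) h1', ?_⟩
          calc a n * v = v * a n := mul_comm _ _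
            _ ≤ u * a n := mul_le_mul_of_nonneg_right h2' (ha n).le
        rw [indicator_of_mem hmem]
      · rw [indicator_of_notMem hv]
        have hnmem : a n * v ∉ Ioc (0:ℝ) (u * a n) := by
          intro hmem
          apply hv
          obtain ⟨h1', h2'⟩ := hmem
          constructor
          · by_contra h
            push_neg at h
            nlinarith [ha n]
          · by_contra h
            push_neg at h
            nlinarith [ha n]
        rw [indicator_of_notMem hnmem]
    rw [h2] at h1
    rw [integral_indicator measurableSet_Ioc, integral_indicator measurableSet_Ioc] at h1
    rw [h1, abs_of_pos (inv_pos.mpr (ha n)), smul_eq_mul, ← mul_assoc,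
      mul_inv_cancel₀ (ha n).ne', one_mul]
  -- decomposition
  have hIdecomp : ∀ n : ℕ, (n:ℝ) * I n
      = (∫ v in Ioc (0:ℝ) u, (n:ℝ) * T (a n * v)) - (n:ℝ) * (u * T (u * a n)) := by
    intro n
    have hint : I n = (∫ ω, (if |X 1 ω| ≤ u * a n then |X 1 ω| else 0) ∂P) / a n := by
      simp only [hIdef]
      rw [← integral_div]
      congr 1
      funext ω
      by_cases h : |X 1 ω| ≤ u * a n
      · rw [if_pos h, if_pos h, abs_div, abs_of_pos (ha n)]
      · rw [if_neg h, if_neg h, abs_zero, zero_div]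
    rw [hint, hlayer n, hcov n]
    rw [integral_const_mul ((n:ℝ)) (fun v => T (a n * v)), mul_div_assoc' ,
      div_eq_iff (ha n).ne']
    ring
  -- limits
  have hsec : Tendsto (fun n : ℕ => (n:ℝ) * (u * T (u * a n))) atTop (nhds (u ^ (1 - α))) := by
    have h1 := (hkey u hu).const_mul u
    have h2 : u * u ^ (-α) = u ^ (1 - α) := by
      rw [show (1:ℝ) - α = 1 + (-α) by ring, Real.rpow_add hu, Real.rpow_one]
    rw [h2] at h1
    refine h1.congr (fun n => ?_)
    rw [mul_comm (a n) u]
    ring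
  have hItend : Tendsto (fun n : ℕ => (n:ℝ) * I n) atTop
      (nhds (u ^ (1 - α) / (1 - α) - u ^ (1 - α))) := by
    have h1 := hJ.sub hsec
    rw [hIval] at h1
    exact h1.congr (fun n => (hIdecomp n).symm)
  -- main per-n bound via Markov
  have hmain : ∀ n : ℕ,
      (P {ω | ∃ k : ℕ, 1 ≤ k ∧ k ≤ n ∧ δ <
        |∑ i ∈ Finset.Icc 1 k,
          ((if |X (i : ℤ) ω| ≤ u * a n then X (i : ℤ) ω / a n else 0)
            - ∫ ω', (if |X (i : ℤ) ω'| ≤ u * a n then X (i : ℤ) ω' / a n else 0) ∂P)|}).toReal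
      ≤ 2 * δ⁻¹ * ((n:ℝ) * I n) := by
    intro n
    have hYmeas : ∀ i : ℕ,
        Measurable (fun ω => if |X (i:ℤ) ω| ≤ u * a n then X (i:ℤ) ω / a n else 0) := fun i =>
      Measurable.ite (measurableSet_le (hXmeas _).abs measurable_const)
        ((hXmeas _).div_const _) measurable_const
    have hYbdd : ∀ (i : ℕ) ω, ‖if |X (i:ℤ) ω| ≤ u * a n then X (i:ℤ) ω / a n else 0‖ ≤ u := by
      intro i ω
      rw [Real.norm_eq_abs]
      by_cases h : |X (i:ℤ) ω| ≤ u * a n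
      · rw [if_pos h, abs_div, abs_of_pos (ha n), div_le_iff₀ (ha n)]
        linarith [mul_comm u (a n)]
      · rw [if_neg h, abs_zero]
        exact hu.le
    have hYint : ∀ i : ℕ,
        Integrable (fun ω => if |X (i:ℤ) ω| ≤ u * a n then X (i:ℤ) ω / a n else 0) P := fun i =>
      (integrable_const u).mono' (hYmeas i).aestronglyMeasurable (ae_of_all _ (hYbdd i))
    set Z : Ω → ℝ := fun ω => ∑ i ∈ Finset.Icc 1 n,
      |(if |X (i:ℤ) ω| ≤ u * a n then X (i:ℤ) ω / a n else 0)
        - ∫ ω', (if |X (i:ℤ) ω'| ≤ u * a n then X (i:ℤ) ω' / a n else 0) ∂P| with hZdef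
    have hZint : Integrable Z P := by
      rw [hZdef]
      exact integrable_finset_sum _ (fun i _ => ((hYint i).sub (integrable_const _)).abs)
    have hZnn : 0 ≤ᵐ[P] Z :=
      ae_of_all _ (fun ω => by
        simp only [hZdef]
        exact Finset.sum_nonneg fun i _ => abs_nonneg _)
    have hsub : {ω | ∃ k : ℕ, 1 ≤ k ∧ k ≤ n ∧ δ <
        |∑ i ∈ Finset.Icc 1 k,
          ((if |X (i : ℤ) ω| ≤ u * a n then X (i : ℤ) ω / a n else 0)
            - ∫ ω', (if |X (i : ℤ) ω'| ≤ u * a n then X (i : ℤ) ω' / a n else 0) ∂P)|}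
        ⊆ {ω | δ ≤ Z ω} := by
      rintro ω ⟨k, hk1, hkn, hδk⟩
      simp only [mem_setOf_eq, hZdef]
      refine le_trans hδk.le (le_trans (Finset.abs_sum_le_sum_abs _ _) ?_)
      exact Finset.sum_le_sum_of_subset_of_nonneg (Finset.Icc_subset_Icc_right hkn)
        (fun i _ _ => abs_nonneg _)
    have hmarkov := mul_meas_ge_le_integral_of_nonneg hZnn hZint δ
    have hmono : (P {ω | ∃ k : ℕ, 1 ≤ k ∧ k ≤ n ∧ δ <
        |∑ i ∈ Finset.Icc 1 k,
          ((if |X (i : ℤ) ω| ≤ u * a n then X (i : ℤ) ω / a n else 0)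
            - ∫ ω', (if |X (i : ℤ) ω'| ≤ u * a n then X (i : ℤ) ω' / a n else 0) ∂P)|}).toReal
        ≤ (P {ω | δ ≤ Z ω}).toReal :=
      ENNReal.toReal_mono (measure_ne_top _ _) (measure_mono hsub)
    have hZval : ∫ ω, Z ω ∂P ≤ 2 * ((n:ℝ) * I n) := by
      rw [hZdef]
      have hint_i : ∀ i ∈ Finset.Icc 1 n,
          Integrable (fun ω => |(if |X (i:ℤ) ω| ≤ u * a n then X (i:ℤ) ω / a n else 0)
            - ∫ ω', (if |X (i:ℤ) ω'| ≤ u * a n then X (i:ℤ) ω' / a n else 0) ∂P|) P :=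
        fun i _ => ((hYint i).sub (integrable_const _)).abs
      rw [integral_finset_sum _ hint_i]
      have hterm : ∀ i ∈ Finset.Icc 1 n,
          (∫ ω, |(if |X (i:ℤ) ω| ≤ u * a n then X (i:ℤ) ω / a n else 0)
            - ∫ ω', (if |X (i:ℤ) ω'| ≤ u * a n then X (i:ℤ) ω' / a n else 0) ∂P| ∂P)
          ≤ 2 * I n := by
        intro i _
        set ci : ℝ := ∫ ω', (if |X (i:ℤ) ω'| ≤ u * a n then X (i:ℤ) ω' / a n else 0) ∂P
          with hcidef
        have hIa : ∫ ω, |if |X (i:ℤ) ω| ≤ u * a n then X (i:ℤ) ω / a n else 0| ∂P = I n := by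
          rw [hIdi n (i:ℤ)]
        have habs : |ci| ≤ I n := by
          rw [← hIa, hcidef]
          have h := norm_integral_le_integral_norm
            (f := fun ω' => if |X (i:ℤ) ω'| ≤ u * a n then X (i:ℤ) ω' / a n else 0) (μ := P)
          simpa [Real.norm_eq_abs] using h
        have h1 : ∀ ω, |(if |X (i:ℤ) ω| ≤ u * a n then X (i:ℤ) ω / a n else 0) - ci|
            ≤ |if |X (i:ℤ) ω| ≤ u * a n then X (i:ℤ) ω / a n else 0| + |ci| := fun ω => by
          simpa [Real.norm_eq_abs] using
            norm_sub_le (if |X (i:ℤ) ω| ≤ u * a n then X (i:ℤ) ω / a n else 0) ci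
        calc (∫ ω, |(if |X (i:ℤ) ω| ≤ u * a n then X (i:ℤ) ω / a n else 0) - ci| ∂P)
            ≤ ∫ ω, (|if |X (i:ℤ) ω| ≤ u * a n then X (i:ℤ) ω / a n else 0| + |ci|) ∂P :=
              integral_mono (((hYint i).sub (integrable_const _)).abs)
                ((hYint i).abs.add (integrable_const _)) h1
          _ = I n + |ci| := by
              rw [integral_add (hYint i).abs (integrable_const _), hIa, integral_const]
              simp
          _ ≤ I n + I n := by linarith
          _ = 2 * I n := by ring
      calc (∑ i ∈ Finset.Icc 1 n,
            ∫ ω, |(if |X (i:ℤ) ω| ≤ u * a n then X (i:ℤ) ω / a n else 0)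
              - ∫ ω', (if |X (i:ℤ) ω'| ≤ u * a n then X (i:ℤ) ω' / a n else 0) ∂P| ∂P)
          ≤ ∑ _i ∈ Finset.Icc 1 n, 2 * I n := Finset.sum_le_sum hterm
        _ = (n:ℝ) * (2 * I n) := by
            rw [Finset.sum_const, Nat.card_Icc]
            simp [nsmul_eq_mul]
        _ = 2 * ((n:ℝ) * I n) := by ring
    have hδi : (0:ℝ) < δ⁻¹ := inv_pos.mpr hδ
    have h6 : (P {ω | δ ≤ Z ω}).toReal ≤ δ⁻¹ * ∫ ω, Z ω ∂P := by
      have h7 := mul_le_mul_of_nonneg_left hmarkov hδi.le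
      have h8 : δ⁻¹ * (δ * (P {ω | δ ≤ Z ω}).toReal) = (P {ω | δ ≤ Z ω}).toReal := by
        field_simp
      simp only [measureReal_def] at h7
      rw [h8] at h7
      exact h7
    calc (P {ω | ∃ k : ℕ, 1 ≤ k ∧ k ≤ n ∧ δ <
        |∑ i ∈ Finset.Icc 1 k,
          ((if |X (i : ℤ) ω| ≤ u * a n then X (i : ℤ) ω / a n else 0)
            - ∫ ω', (if |X (i : ℤ) ω'| ≤ u * a n then X (i : ℤ) ω' / a n else 0) ∂P)|}).toReal
        ≤ (P {ω | δ ≤ Z ω}).toReal := hmono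
      _ ≤ δ⁻¹ * ∫ ω, Z ω ∂P := h6
      _ ≤ δ⁻¹ * (2 * ((n:ℝ) * I n)) := mul_le_mul_of_nonneg_left hZval hδi.le
      _ = 2 * δ⁻¹ * ((n:ℝ) * I n) := by ring
  -- wrap up
  have hlim2 : Tendsto (fun n : ℕ => 2 * δ⁻¹ * ((n:ℝ) * I n)) atTop
      (nhds (2 * δ⁻¹ * (u ^ (1 - α) / (1 - α) - u ^ (1 - α)))) := hItend.const_mul _
  have hcobdd : IsCoboundedUnder (· ≤ ·) atTop (fun n : ℕ =>
      (P {ω | ∃ k : ℕ, 1 ≤ k ∧ k ≤ n ∧ δ <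
        |∑ i ∈ Finset.Icc 1 k,
          ((if |X (i : ℤ) ω| ≤ u * a n then X (i : ℤ) ω / a n else 0)
            - ∫ ω', (if |X (i : ℤ) ω'| ≤ u * a n then X (i : ℤ) ω' / a n else 0) ∂P)|}).toReal) :=
    (isBoundedUnder_of ⟨0, fun n => ENNReal.toReal_nonneg⟩ :
      IsBoundedUnder (· ≥ ·) atTop _).isCoboundedUnder_le
  have h1α : (1:ℝ) - α ≠ 0 := by linarith
  have hfin2 := limsup_le_limsup (Eventually.of_forall hmain) hcobdd hlim2.isBoundedUnder_le
  rw [hlim2.limsup_eq] at hfin2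
  have heq : 2 * δ⁻¹ * (u ^ (1 - α) / (1 - α) - u ^ (1 - α))
      = 2 * δ⁻¹ * (α / (1 - α)) * u ^ (1 - α) := by
    field_simp
    ring
  rw [← heq]
  exact hfin2
end

section
/- Let (X_n)_{n∈ℤ} be a strictly stationary sequence whose marginal X_1 is regularly varying with index α>0, let (a_n) be a positive sequence with n P(|X_1|>a_n) → 1, and let (r_n) be a sequence of positive integers with r_n → ∞ and r_n/n → 0. If for every t>0, n Σ_{i=1}^{r_n} P( |X_0|>t a_n, |X_i|>t a_n ) → 0 as n→∞, then Condition 2.1 holds with this sequence (r_n): for every u>0, lim_{m→∞} limsup_{n→∞} P( max_{m≤|i|≤r_n} |X_i| > u a_n | |X_0| > u a_n ) = 0. -/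
open MeasureTheory Filter Set

private lemma pair_stationary
    {Ω : Type*} [MeasurableSpace Ω] (P : Measure Ω)
    (X : ℤ → Ω → ℝ) (hXmeas : ∀ i, Measurable (X i))
    (hstat : ∀ (k : ℤ) (m : ℕ),
      Measure.map (fun ω => fun j : Fin m => X (1 + k + (j : ℤ)) ω) P
        = Measure.map (fun ω => fun j : Fin m => X (1 + (j : ℤ)) ω) P)
    (c : ℝ) (j : ℕ) :
    P {ω | c < |X (-(j:ℤ)) ω| ∧ c < |X 0 ω|}
      = P {ω | c < |X 0 ω| ∧ c < |X (j:ℤ) ω|} := by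
  have hF : ∀ k : ℤ, Measurable (fun ω => fun i : Fin (j+1) => X (1 + k + (i : ℤ)) ω) :=
    fun k => measurable_pi_lambda _ fun i => hXmeas _
  have key := (hstat (-(j:ℤ) - 1) (j+1)).trans (hstat (-1) (j+1)).symm
  set S : Set (Fin (j+1) → ℝ) :=
    {v | c < |v ⟨0, Nat.succ_pos j⟩| ∧ c < |v ⟨j, Nat.lt_succ_self j⟩|} with hS
  have hSm : MeasurableSet S :=
    (measurableSet_lt measurable_const (measurable_pi_apply _).abs).inter
      (measurableSet_lt measurable_const (measurable_pi_apply _).abs)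
  have h1 := congrArg (fun μ : Measure _ => μ S) key
  simp only [Measure.map_apply (hF _) hSm] at h1
  have e1 : (fun ω => fun i : Fin (j+1) => X (1 + (-(j:ℤ) - 1) + (i : ℤ)) ω) ⁻¹' S
      = {ω | c < |X (-(j:ℤ)) ω| ∧ c < |X 0 ω|} := by
    ext ω
    simp only [hS, mem_preimage, mem_setOf_eq]
    norm_num
  have e2 : (fun ω => fun i : Fin (j+1) => X (1 + (-1 : ℤ) + (i : ℤ)) ω) ⁻¹' S
      = {ω | c < |X 0 ω| ∧ c < |X (j:ℤ) ω|} := by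
    ext ω
    simp only [hS, mem_preimage, mem_setOf_eq]
    norm_num
  rwa [e1, e2] at h1

private lemma single_stationary
    {Ω : Type*} [MeasurableSpace Ω] (P : Measure Ω)
    (X : ℤ → Ω → ℝ) (hXmeas : ∀ i, Measurable (X i))
    (hstat : ∀ (k : ℤ) (m : ℕ),
      Measure.map (fun ω => fun j : Fin m => X (1 + k + (j : ℤ)) ω) P
        = Measure.map (fun ω => fun j : Fin m => X (1 + (j : ℤ)) ω) P)
    (c : ℝ) :
    P {ω | c < |X 0 ω|} = P {ω | c < |X 1 ω|} := by
  have hF : ∀ k : ℤ, Measurable (fun ω => fun i : Fin 1 => X (1 + k + (i : ℤ)) ω) :=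
    fun k => measurable_pi_lambda _ fun i => hXmeas _
  have key := hstat (-1) 1
  set S : Set (Fin 1 → ℝ) := {v | c < |v 0|} with hS
  have hSm : MeasurableSet S :=
    measurableSet_lt measurable_const (measurable_pi_apply _).abs
  have h1 := congrArg (fun μ : Measure _ => μ S) key
  simp only [Measure.map_apply (hF _) hSm,
    Measure.map_apply (measurable_pi_lambda _ fun i : Fin 1 => hXmeas _) hSm] at h1
  have e1 : (fun ω => fun i : Fin 1 => X (1 + (-1 : ℤ) + (i : ℤ)) ω) ⁻¹' S
      = {ω | c < |X 0 ω|} := by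
    ext ω; simp [hS]
  have e2 : (fun ω => fun i : Fin 1 => X (1 + (i : ℤ)) ω) ⁻¹' S
      = {ω | c < |X 1 ω|} := by
    ext ω; simp [hS]
  rwa [e1, e2] at h1

/-- if pairwise joint tail probabilities are negligible, i.e.
`n Σ_{i=1}^{r_n} P(|X_0|>t aₙ, |X_i|>t aₙ) → 0` for every `t>0`, then the
anti-clustering Condition 2.1 holds with the same sequence `(r_n)`. -/
theorem pairwise_negligible_implies_anticlustering
    {Ω : Type*} [MeasurableSpace Ω] (P : Measure Ω) [IsProbabilityMeasure P]
    (X : ℤ → Ω → ℝ) (hXmeas : ∀ i, Measurable (X i))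
    -- strict stationarity
    (hstat : ∀ (k : ℤ) (m : ℕ),
      Measure.map (fun ω => fun j : Fin m => X (1 + k + (j : ℤ)) ω) P
        = Measure.map (fun ω => fun j : Fin m => X (1 + (j : ℤ)) ω) P)
    (α : ℝ) (hα : 0 < α)
    -- |X₁| is regularly varying with index α
    (hpos : ∀ x : ℝ, 0 < x → 0 < P {ω | x < |X 1 ω|})
    (hrv : ∀ u : ℝ, 0 < u →
      Tendsto (fun x : ℝ =>
          (P {ω | u * x < |X 1 ω|}).toReal / (P {ω | x < |X 1 ω|}).toReal)
        atTop (nhds (u ^ (-α))))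
    -- the normalizing sequence
    (a : ℕ → ℝ) (ha : ∀ n, 0 < a n)
    (han : Tendsto (fun n : ℕ => (n : ℝ) * (P {ω | a n < |X 1 ω|}).toReal)
      atTop (nhds 1))
    -- the block length sequence
    (r : ℕ → ℕ) (hr1 : Tendsto r atTop atTop)
    (hr2 : Tendsto (fun n : ℕ => (r n : ℝ) / n) atTop (nhds 0))
    -- joint tails are negligible
    (hjoint : ∀ t : ℝ, 0 < t →
      Tendsto (fun n : ℕ => (n : ℝ) * ∑ i ∈ Finset.Icc 1 (r n),
          (P {ω | t * a n < |X 0 ω| ∧ t * a n < |X (i : ℤ) ω|}).toReal)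
        atTop (nhds 0)) :
    -- Condition 2.1
    ∀ u : ℝ, 0 < u →
      Tendsto (fun m : ℕ =>
        limsup (fun n : ℕ =>
          (P {ω | (∃ i : ℤ, (m : ℤ) ≤ |i| ∧ |i| ≤ (r n : ℤ) ∧ u * a n < |X i ω|)
              ∧ u * a n < |X 0 ω|}).toReal
            / (P {ω | u * a n < |X 0 ω|}).toReal) atTop)
        atTop (nhds 0) := by
  intro u hu
  -- a → ∞
  have haT : Tendsto a atTop atTop := by
    have hP0 : Tendsto (fun n : ℕ => (P {ω | a n < |X 1 ω|}).toReal) atTop (nhds 0) := by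
      have h := han.div_atTop tendsto_natCast_atTop_atTop
      refine h.congr' ?_
      filter_upwards [eventually_gt_atTop 0] with n hn
      field_simp
    rw [tendsto_atTop]
    intro b
    have hM : 0 < max b 1 := lt_of_lt_of_le one_pos (le_max_right _ _)
    have hPM : 0 < (P {ω | max b 1 < |X 1 ω|}).toReal :=
      ENNReal.toReal_pos (hpos _ hM).ne' (measure_ne_top P _)
    filter_upwards [hP0.eventually_lt_const hPM] with n hn
    by_contra hab
    push_neg at hab
    have hsub : {ω | max b 1 < |X 1 ω|} ⊆ {ω | a n < |X 1 ω|} := fun ω hω =>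
      lt_trans (lt_of_lt_of_le hab (le_max_left _ _)) hω
    exact absurd (ENNReal.toReal_mono (measure_ne_top P _) (measure_mono hsub))
      (not_le.mpr hn)
  -- positivity of tail probabilities
  have hQpos : ∀ n, 0 < (P {ω | u * a n < |X 1 ω|}).toReal := fun n =>
    ENNReal.toReal_pos (hpos _ (mul_pos hu (ha n))).ne' (measure_ne_top P _)
  have hPapos : ∀ n, 0 < (P {ω | a n < |X 1 ω|}).toReal := fun n =>
    ENNReal.toReal_pos (hpos _ (ha n)).ne' (measure_ne_top P _)
  -- denominator limit : n * P(u aₙ < |X₁|) → u^(-α)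
  have hden : Tendsto (fun n : ℕ => (n : ℝ) * (P {ω | u * a n < |X 1 ω|}).toReal)
      atTop (nhds (u ^ (-α))) := by
    have h1 := ((hrv u hu).comp haT)
    have h2 := han.mul h1
    rw [one_mul] at h2
    refine h2.congr fun n => ?_
    have := (hPapos n).ne'
    simp only [Function.comp_apply]
    field_simp
  have hupos : (0:ℝ) < u ^ (-α) := Real.rpow_pos_of_pos hu _
  -- joint sums
  set Sn : ℕ → ℝ := fun n => ∑ i ∈ Finset.Icc 1 (r n),
      (P {ω | u * a n < |X 0 ω| ∧ u * a n < |X (i : ℤ) ω|}).toReal with hSn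
  have hSnonneg : ∀ n, 0 ≤ Sn n := fun n =>
    Finset.sum_nonneg fun i _ => ENNReal.toReal_nonneg
  have hjointu := hjoint u hu
  -- the key bound: for m ≥ 1, numerator ≤ 2 Sn n
  have hbound : ∀ (m : ℕ), 1 ≤ m → ∀ n,
      (P {ω | (∃ i : ℤ, (m : ℤ) ≤ |i| ∧ |i| ≤ (r n : ℤ) ∧ u * a n < |X i ω|)
          ∧ u * a n < |X 0 ω|}).toReal ≤ 2 * Sn n := by
    intro m hm n
    set c := u * a n with hc
    have hsub : {ω | (∃ i : ℤ, (m : ℤ) ≤ |i| ∧ |i| ≤ (r n : ℤ) ∧ c < |X i ω|)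
          ∧ c < |X 0 ω|}
        ⊆ ⋃ j ∈ Finset.Icc 1 (r n),
            ({ω | c < |X 0 ω| ∧ c < |X (j : ℤ) ω|}
              ∪ {ω | c < |X (-(j:ℤ)) ω| ∧ c < |X 0 ω|}) := by
      rintro ω ⟨⟨i, hmi, hir, hXi⟩, hX0⟩
      have h1i : 1 ≤ |i| := le_trans (by exact_mod_cast hm) hmi
      rw [Int.abs_eq_natAbs] at hmi hir h1i
      have hj1 : i.natAbs ∈ Finset.Icc 1 (r n) := by
        simp only [Finset.mem_Icc]
        omega
      refine Set.mem_biUnion hj1 ?_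
      · rcases le_or_gt 0 i with hi | hi
        · left
          have : (i.natAbs : ℤ) = i := Int.natAbs_of_nonneg hi
          exact ⟨hX0, by rwa [this]⟩
        · right
          have : -(i.natAbs : ℤ) = i := by omega
          exact ⟨by rwa [this], hX0⟩
    have h1 : P {ω | (∃ i : ℤ, (m : ℤ) ≤ |i| ∧ |i| ≤ (r n : ℤ) ∧ c < |X i ω|)
          ∧ c < |X 0 ω|}
        ≤ ∑ j ∈ Finset.Icc 1 (r n),
            (P {ω | c < |X 0 ω| ∧ c < |X (j : ℤ) ω|}
              + P {ω | c < |X (-(j:ℤ)) ω| ∧ c < |X 0 ω|}) := by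
      refine le_trans (measure_mono hsub) ?_
      refine le_trans (measure_biUnion_finset_le _ _) ?_
      exact Finset.sum_le_sum fun j _ => measure_union_le _ _
    have h2 : ∀ j : ℕ, P {ω | c < |X (-(j:ℤ)) ω| ∧ c < |X 0 ω|}
        = P {ω | c < |X 0 ω| ∧ c < |X (j : ℤ) ω|} :=
      fun j => pair_stationary P X hXmeas hstat c j
    have h3 : P {ω | (∃ i : ℤ, (m : ℤ) ≤ |i| ∧ |i| ≤ (r n : ℤ) ∧ c < |X i ω|)
          ∧ c < |X 0 ω|}
        ≤ ∑ j ∈ Finset.Icc 1 (r n),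
            2 * P {ω | c < |X 0 ω| ∧ c < |X (j : ℤ) ω|} := by
      refine le_trans h1 (le_of_eq (Finset.sum_congr rfl fun j _ => ?_))
      rw [h2 j, two_mul]
    have hfin : (∑ j ∈ Finset.Icc 1 (r n),
        2 * P {ω | c < |X 0 ω| ∧ c < |X (j : ℤ) ω|}) ≠ ⊤ := by
      refine (ENNReal.sum_lt_top.mpr fun j _ => ?_).ne
      exact ENNReal.mul_lt_top ENNReal.ofNat_lt_top (measure_lt_top P _)
    have h4 := ENNReal.toReal_mono hfin h3
    refine le_trans h4 ?_
    rw [ENNReal.toReal_sum (fun j _ => ?_)]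
    · rw [hSn, Finset.mul_sum]
      refine le_of_eq (Finset.sum_congr rfl fun j _ => ?_)
      rw [ENNReal.toReal_mul]
      norm_num
      rfl
    · exact (ENNReal.mul_lt_top (by norm_num) (measure_lt_top P _)).ne
  -- for each m ≥ 1 the ratio tends to 0
  have hratio : ∀ (m : ℕ), 1 ≤ m →
      Tendsto (fun n : ℕ =>
        (P {ω | (∃ i : ℤ, (m : ℤ) ≤ |i| ∧ |i| ≤ (r n : ℤ) ∧ u * a n < |X i ω|)
            ∧ u * a n < |X 0 ω|}).toReal
          / (P {ω | u * a n < |X 0 ω|}).toReal) atTop (nhds 0) := by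
    intro m hm
    have hB : ∀ n, (P {ω | u * a n < |X 0 ω|}).toReal
        = (P {ω | u * a n < |X 1 ω|}).toReal := fun n =>
      congrArg ENNReal.toReal (single_stationary P X hXmeas hstat _)
    have hg : Tendsto (fun n : ℕ => (2 * ((n : ℝ) * Sn n))
        / ((n : ℝ) * (P {ω | u * a n < |X 1 ω|}).toReal)) atTop (nhds 0) := by
      have := ((hjointu.const_mul 2).div hden hupos.ne')
      rw [mul_zero, zero_div] at this
      exact this
    refine tendsto_of_tendsto_of_tendsto_of_le_of_le' tendsto_const_nhds hg ?_ ?_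
    · filter_upwards with n
      exact div_nonneg ENNReal.toReal_nonneg ENNReal.toReal_nonneg
    · filter_upwards [eventually_gt_atTop 0] with n hn
      rw [hB n]
      have hnum := hbound m hm n
      have hQ := hQpos n
      have hnpos : (0:ℝ) < (n : ℝ) := by exact_mod_cast hn
      rw [show (2 * ((n : ℝ) * Sn n)) / ((n : ℝ) * (P {ω | u * a n < |X 1 ω|}).toReal)
          = (2 * Sn n) / (P {ω | u * a n < |X 1 ω|}).toReal by
        field_simp]
      exact div_le_div_of_nonneg_right hnum hQ.le
  -- conclude
  have hls : ∀ (m : ℕ), 1 ≤ m →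
      limsup (fun n : ℕ =>
        (P {ω | (∃ i : ℤ, (m : ℤ) ≤ |i| ∧ |i| ≤ (r n : ℤ) ∧ u * a n < |X i ω|)
            ∧ u * a n < |X 0 ω|}).toReal
          / (P {ω | u * a n < |X 0 ω|}).toReal) atTop = 0 :=
    fun m hm => (hratio m hm).limsup_eq
  refine Tendsto.congr' ?_ (tendsto_const_nhds : Tendsto (fun _ : ℕ => (0:ℝ)) atTop (nhds 0))
  filter_upwards [eventually_ge_atTop 1] with m hm
  exact (hls m hm).symm
end

section
/- Let m ≥ 1, α ∈ (0,2), p ∈ [0,1], q = 1−p, and let c_0,…,c_m be nonnegative constants with c_0 > 0, c_m > 0 and Σ_{i=0}^m c_i^α = 1 (set c_j := 0 for j ∉ {0,…,m}). Let K and Θ_0 be independent random variables with P(K=k)=c_k^α for k ∈ {0,…,m} and P(Θ_0=1)=p=1−P(Θ_0=−1), and define the spectral tail process Θ_n = (c_{n+K}/c_K) Θ_0 for n ∈ ℤ. Then E[ ( max( Σ_{n≥0} Θ_n, 0 ) )^α · 1{ Θ_n = 0 for all n ≤ −1 } ] = p ( Σ_{i=0}^m c_i )^α and E[ ( max( −Σ_{n≥0}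 Θ_n, 0 ) )^α · 1{ Θ_n = 0 for all n ≤ −1 } ] = q ( Σ_{i=0}^m c_i )^α; consequently c_+ + c_- = ( Σ_{i=0}^m c_i )^α. -/
open MeasureTheory ProbabilityTheory Filter Set

/-- for the spectral tail process `Θ_n = (c_{n+K}/c_K) Θ₀` of a finite
moving average with nonnegative coefficients `c_0,…,c_m`, `Σ c_i^α = 1`,
`c_+ = E[(max(Σ_{n≥0}Θ_n,0))^α 1{∀n≤−1 : Θ_n=0}] = p (Σ_i c_i)^α`,
`c_- = E[(max(−Σ_{n≥0}Θ_n,0))^α 1{∀n≤−1 : Θ_n=0}] = q (Σ_i c_i)^α`,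
hence `c_+ + c_- = (Σ_i c_i)^α`. -/
theorem spectral_constants_moving_average
    {Ω : Type*} [MeasurableSpace Ω] (P : Measure Ω) [IsProbabilityMeasure P]
    (m : ℕ) (hm : 1 ≤ m)
    (α p q : ℝ) (hα : 0 < α) (hα2 : α < 2)
    (hp0 : 0 ≤ p) (hp1 : p ≤ 1) (hq : q = 1 - p)
    -- the coefficients, extended by 0 outside {0,…,m}
    (c : ℤ → ℝ) (hcnonneg : ∀ j, 0 ≤ c j)
    (hc0 : 0 < c 0) (hcm : 0 < c (m : ℤ))
    (hczero : ∀ j : ℤ, (j < 0 ∨ (m : ℤ) < j) → c j = 0)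
    (hcsum : ∑ i ∈ Finset.range (m + 1), c (i : ℤ) ^ α = 1)
    -- K and Θ₀ with the given distributions, independent
    (K : Ω → ℕ) (Θ0 : Ω → ℝ) (hKm : Measurable K) (hΘ0m : Measurable Θ0)
    (hK : ∀ k : ℕ, k ≤ m → P {ω | K ω = k} = ENNReal.ofReal (c (k : ℤ) ^ α))
    (hΘ0p : P {ω | Θ0 ω = 1} = ENNReal.ofReal p)
    (hΘ0q : P {ω | Θ0 ω = -1} = ENNReal.ofReal (1 - p))
    (hindep : IndepFun K Θ0 P)
    -- the spectral tail process
    (Θ : ℤ → Ω → ℝ)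
    (hΘ : ∀ (n : ℤ) (ω : Ω), Θ n ω = (c (n + (K ω : ℤ)) / c (K ω : ℤ)) * Θ0 ω) :
    (∫ ω, Set.indicator {ω | ∀ n : ℤ, n ≤ -1 → Θ n ω = 0}
        (fun ω => (max (∑' n : ℕ, Θ (n : ℤ) ω) 0) ^ α) ω ∂P
      = p * (∑ i ∈ Finset.range (m + 1), c (i : ℤ)) ^ α)
    ∧ (∫ ω, Set.indicator {ω | ∀ n : ℤ, n ≤ -1 → Θ n ω = 0}
        (fun ω => (max (-∑' n : ℕ, Θ (n : ℤ) ω) 0) ^ α) ω ∂P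
      = q * (∑ i ∈ Finset.range (m + 1), c (i : ℤ)) ^ α)
    ∧ p * (∑ i ∈ Finset.range (m + 1), c (i : ℤ)) ^ α
        + q * (∑ i ∈ Finset.range (m + 1), c (i : ℤ)) ^ α
      = (∑ i ∈ Finset.range (m + 1), c (i : ℤ)) ^ α := by
  classical
  set S := ∑ i ∈ Finset.range (m + 1), c (i : ℤ) with hSdef
  have hSpos : 0 < S := by
    refine Finset.sum_pos' (fun i _ => hcnonneg _) ⟨0, Finset.mem_range.mpr (Nat.succ_pos m), ?_⟩
    simpa using hc0
  have hmK : ∀ k : ℕ, MeasurableSet {ω | K ω = k} := fun k => hKm (measurableSet_singleton k)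
  have hmΘ : ∀ x : ℝ, MeasurableSet {ω | Θ0 ω = x} := fun x => hΘ0m (measurableSet_singleton x)
  -- union of K-level sets
  have hUnion : {ω | K ω ≤ m} = ⋃ k ∈ Finset.range (m + 1), {ω | K ω = k} := by
    ext ω
    simp only [Set.mem_setOf_eq, Set.mem_iUnion, Finset.mem_range, Nat.lt_succ_iff]
    constructor
    · intro h; exact ⟨K ω, h, rfl⟩
    · rintro ⟨k, hk, hke⟩; omega
  have hdisj : (↑(Finset.range (m + 1)) : Set ℕ).PairwiseDisjoint
      (fun k => {ω | K ω = k}) := by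
    intro i _ j _ hij
    refine Set.disjoint_left.mpr fun ω hi hj => hij ?_
    simp only [Set.mem_setOf_eq] at hi hj
    omega
  have hPU : P {ω | K ω ≤ m} = 1 := by
    rw [hUnion, measure_biUnion_finset hdisj (fun k _ => hmK k)]
    rw [Finset.sum_congr rfl
      (fun k hk => hK k (Nat.lt_succ_iff.mp (Finset.mem_range.mp hk)))]
    rw [← ENNReal.ofReal_sum_of_nonneg (fun i _ => Real.rpow_nonneg (hcnonneg _) α),
      hcsum, ENNReal.ofReal_one]
  have hA1 : P {ω | ¬ K ω ≤ m} = 0 := by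
    have hms : MeasurableSet {ω | K ω ≤ m} := by
      rw [hUnion]
      exact (Finset.range (m + 1)).measurableSet_biUnion (fun k _ => hmK k)
    have : {ω | ¬ K ω ≤ m} = {ω | K ω ≤ m}ᶜ := rfl
    rw [this, measure_compl hms (measure_ne_top _ _), measure_univ, hPU, tsub_self]
  have hA2 : P {ω | K ω ≤ m ∧ c ((K ω : ℤ)) = 0} = 0 := by
    refine measure_mono_null (t := ⋃ k ∈ (↑(Finset.range (m + 1)) : Set ℕ),
      {ω | K ω = k ∧ c ((k : ℤ)) = 0}) ?_ ?_
    · rintro ω ⟨h1, h2⟩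
      simp only [Set.mem_iUnion, Finset.coe_range, Set.mem_Iio, Nat.lt_succ_iff,
        Set.mem_setOf_eq]
      exact ⟨K ω, h1, rfl, h2⟩
    · rw [measure_biUnion_null_iff (Finset.range (m + 1)).countable_toSet]
      intro k hk
      rw [Finset.mem_coe] at hk
      by_cases hck : c ((k : ℤ)) = 0
      · have : {ω | K ω = k ∧ c ((k : ℤ)) = 0} = {ω | K ω = k} := by
          ext ω; simp [hck]
        rw [this, hK k (Nat.lt_succ_iff.mp (Finset.mem_range.mp hk)), hck,
          Real.zero_rpow hα.ne', ENNReal.ofReal_zero]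
      · have : {ω | K ω = k ∧ c ((k : ℤ)) = 0} = (∅ : Set Ω) := by
          ext ω; simp [hck]
        rw [this, measure_empty]
  have hdisjΘ : Disjoint {ω | Θ0 ω = 1} {ω | Θ0 ω = -1} := by
    refine Set.disjoint_left.mpr fun ω h1 h2 => ?_
    simp only [Set.mem_setOf_eq] at h1 h2
    rw [h1] at h2; norm_num at h2
  have hPΘ : P ({ω | Θ0 ω = 1} ∪ {ω | Θ0 ω = -1}) = 1 := by
    rw [measure_union hdisjΘ (hmΘ (-1)), hΘ0p, hΘ0q,
      ← ENNReal.ofReal_add hp0 (by linarith)]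
    norm_num
  have hnΘ : P ({ω | Θ0 ω = 1} ∪ {ω | Θ0 ω = -1})ᶜ = 0 := by
    rw [measure_compl ((hmΘ 1).union (hmΘ (-1))) (measure_ne_top _ _),
      measure_univ, hPΘ, tsub_self]
  have haeG : ∀ᵐ ω ∂P, K ω ≤ m ∧ c ((K ω : ℤ)) ≠ 0 ∧ (Θ0 ω = 1 ∨ Θ0 ω = -1) := by
    rw [ae_iff]
    refine measure_mono_null (t := {ω | ¬ K ω ≤ m} ∪
      ({ω | K ω ≤ m ∧ c ((K ω : ℤ)) = 0} ∪
        ({ω | Θ0 ω = 1} ∪ {ω | Θ0 ω = -1})ᶜ)) ?_ ?_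
    · intro ω hω
      simp only [Set.mem_setOf_eq] at hω
      by_cases h1 : K ω ≤ m
      · by_cases h2 : c ((K ω : ℤ)) = 0
        · exact Or.inr (Or.inl ⟨h1, h2⟩)
        · refine Or.inr (Or.inr fun hc => ?_)
          simp only [Set.mem_union, Set.mem_setOf_eq] at hc
          exact hω ⟨h1, h2, hc⟩
      · exact Or.inl h1
    · exact measure_union_null hA1 (measure_union_null hA2 hnΘ)
  -- pointwise facts
  have hmem0 : ∀ ω, K ω = 0 → ω ∈ {ω | ∀ n : ℤ, n ≤ -1 → Θ n ω = 0} := by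
    intro ω h0 n hn
    rw [hΘ, h0]
    have hz : c (n + ((0 : ℕ) : ℤ)) = 0 := by
      apply hczero; left; push_cast; linarith
    rw [hz]
    simp
  have hnmem : ∀ ω, K ω ≠ 0 → c ((K ω : ℤ)) ≠ 0 → Θ0 ω ≠ 0 →
      ω ∉ {ω | ∀ n : ℤ, n ≤ -1 → Θ n ω = 0} := by
    intro ω hk hck hθ hmem
    have h1 : 1 ≤ K ω := Nat.one_le_iff_ne_zero.mpr hk
    have h2 := hmem (-(K ω : ℤ)) (by omega)
    rw [hΘ] at h2
    have h3 : -(K ω : ℤ) + (K ω : ℤ) = 0 := by ring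
    rw [h3] at h2
    rcases mul_eq_zero.mp h2 with h | h
    · rcases div_eq_zero_iff.mp h with h' | h'
      · exact absurd h' (ne_of_gt hc0)
      · exact hck h'
    · exact hθ h
  have hts : ∀ ω, K ω = 0 → (∑' n : ℕ, Θ (n : ℤ) ω) = S / c 0 * Θ0 ω := by
    intro ω h0
    have h1 : ∀ n : ℕ, Θ (n : ℤ) ω = c ((n : ℤ)) / c 0 * Θ0 ω := by
      intro n
      rw [hΘ, h0]
      norm_num
    rw [tsum_congr h1, tsum_eq_sum (s := Finset.range (m + 1)) ?_]
    · rw [← Finset.sum_mul, ← Finset.sum_div]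
    · intro n hn
      have hn' : (m : ℤ) < (n : ℤ) := by
        have := Finset.mem_range.not.mp hn
        omega
      rw [hczero _ (Or.inr hn')]
      simp
  have hSc : 0 ≤ S / c 0 := div_nonneg hSpos.le hc0.le
  have hfin : ∀ (x y : ℝ), 0 ≤ x → P ({ω | K ω = 0} ∩ {ω | Θ0 ω = y}) = ENNReal.ofReal x →
      ∫ ω, Set.indicator ({ω | K ω = 0} ∩ {ω | Θ0 ω = y})
        (fun _ => (S / c 0) ^ α) ω ∂P = x * (S / c 0) ^ α := by
    intro x y hx hPxy
    rw [integral_indicator_const _ ((hmK 0).inter (hmΘ y)), measureReal_def, hPxy,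
      ENNReal.toReal_ofReal hx, smul_eq_mul]
  have hprod : ∀ y : ℝ, P ({ω | K ω = 0} ∩ {ω | Θ0 ω = y})
      = ENNReal.ofReal (c 0 ^ α) * P {ω | Θ0 ω = y} := by
    intro y
    have h := hindep.measure_inter_preimage_eq_mul (s := {0}) (t := {y})
      (measurableSet_singleton _) (measurableSet_singleton _)
    have hK0 : P {ω | K ω = 0} = ENNReal.ofReal (c 0 ^ α) := by
      have := hK 0 (Nat.zero_le m)
      simpa using this
    have hset1 : K ⁻¹' {0} = {ω | K ω = 0} := rfl
    have hset2 : Θ0 ⁻¹' {y} = {ω | Θ0 ω = y} := rfl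
    rw [hset1, hset2, hK0] at h
    exact h
  have harith : ∀ x : ℝ, 0 ≤ x → (c 0 ^ α * x) * (S / c 0) ^ α = x * S ^ α := by
    intro x hx
    rw [Real.div_rpow hSpos.le hc0.le]
    have hcα : (0 : ℝ) < c 0 ^ α := Real.rpow_pos_of_pos hc0 α
    field_simp
  -- part 1
  have key1 : ∫ ω, Set.indicator {ω | ∀ n : ℤ, n ≤ -1 → Θ n ω = 0}
      (fun ω => (max (∑' n : ℕ, Θ (n : ℤ) ω) 0) ^ α) ω ∂P
      = p * S ^ α := by
    have hae1 : (fun ω => Set.indicator {ω | ∀ n : ℤ, n ≤ -1 → Θ n ω = 0}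
        (fun ω => (max (∑' n : ℕ, Θ (n : ℤ) ω) 0) ^ α) ω)
        =ᵐ[P] (fun ω => Set.indicator ({ω | K ω = 0} ∩ {ω | Θ0 ω = 1})
          (fun _ => (S / c 0) ^ α) ω) := by
      filter_upwards [haeG] with ω hω
      obtain ⟨hkm, hck, hθ⟩ := hω
      by_cases h0 : K ω = 0
      · rw [Set.indicator_of_mem (hmem0 ω h0)]
        rcases hθ with h1 | h1
        · rw [Set.indicator_of_mem (show ω ∈ ({ω | K ω = 0} ∩ {ω | Θ0 ω = 1}) from ⟨h0, h1⟩)]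
          rw [hts ω h0, h1, mul_one, max_eq_left hSc]
        · rw [Set.indicator_of_notMem (by
            rintro ⟨-, h⟩
            simp only [Set.mem_setOf_eq] at h
            rw [h1] at h; norm_num at h)]
          rw [hts ω h0, h1, mul_neg_one,
            max_eq_right (neg_nonpos.mpr hSc), Real.zero_rpow hα.ne']
      · have hθ0 : Θ0 ω ≠ 0 := by rcases hθ with h | h <;> rw [h] <;> norm_num
        rw [Set.indicator_of_notMem (hnmem ω h0 hck hθ0),
          Set.indicator_of_notMem (by rintro ⟨h, -⟩; exact h0 h)]
    rw [integral_congr_ae hae1]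
    rw [hfin (c 0 ^ α * p) 1 (mul_nonneg (Real.rpow_nonneg hc0.le α) hp0)
      (by rw [hprod 1, hΘ0p, ← ENNReal.ofReal_mul (Real.rpow_nonneg hc0.le α)])]
    exact harith p hp0
  -- part 2
  have key2 : ∫ ω, Set.indicator {ω | ∀ n : ℤ, n ≤ -1 → Θ n ω = 0}
      (fun ω => (max (-∑' n : ℕ, Θ (n : ℤ) ω) 0) ^ α) ω ∂P
      = q * S ^ α := by
    have hae2 : (fun ω => Set.indicator {ω | ∀ n : ℤ, n ≤ -1 → Θ n ω = 0}
        (fun ω => (max (-∑' n : ℕ, Θ (n : ℤ) ω) 0) ^ α) ω)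
        =ᵐ[P] (fun ω => Set.indicator ({ω | K ω = 0} ∩ {ω | Θ0 ω = -1})
          (fun _ => (S / c 0) ^ α) ω) := by
      filter_upwards [haeG] with ω hω
      obtain ⟨hkm, hck, hθ⟩ := hω
      by_cases h0 : K ω = 0
      · rw [Set.indicator_of_mem (hmem0 ω h0)]
        rcases hθ with h1 | h1
        · rw [Set.indicator_of_notMem (by
            rintro ⟨-, h⟩
            simp only [Set.mem_setOf_eq] at h
            rw [h1] at h; norm_num at h)]
          rw [hts ω h0, h1, mul_one,
            max_eq_right (neg_nonpos.mpr hSc), Real.zero_rpow hα.ne']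
        · rw [Set.indicator_of_mem (show ω ∈ ({ω | K ω = 0} ∩ {ω | Θ0 ω = -1}) from ⟨h0, h1⟩)]
          rw [hts ω h0, h1, mul_neg_one, neg_neg, max_eq_left hSc]
      · have hθ0 : Θ0 ω ≠ 0 := by rcases hθ with h | h <;> rw [h] <;> norm_num
        rw [Set.indicator_of_notMem (hnmem ω h0 hck hθ0),
          Set.indicator_of_notMem (by rintro ⟨h, -⟩; exact h0 h)]
    rw [integral_congr_ae hae2]
    rw [hfin (c 0 ^ α * (1 - p)) (-1)
      (mul_nonneg (Real.rpow_nonneg hc0.le α) (by linarith))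
      (by rw [hprod (-1), hΘ0q, ← ENNReal.ofReal_mul (Real.rpow_nonneg hc0.le α)])]
    rw [harith (1 - p) (by linarith), hq]
  exact ⟨key1, key2, by rw [hq]; ring⟩
end
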